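/- arXiv:2602.14034 — 4 statements merged into one kernel-verified Lean document; each statement's English description precedes it below -/
import Mathlib

section
/- Let z be a nonzero normal element of the skew polynomial ring S_P = k_P[x_1,…,x_n], and write z = z_1 + … + z_k as its decomposition into nonzero ℕ^n-homogeneous components. Then each z_j is a normal element and the automorphisms η_{z_j} all equal η_z. -/
/-!
The ordered monomials `x^a` form a `k`-basis of `S_P` with `x^a x^b = σ(a, b) x^{a+b}` for a
bicharacter `σ`; this is seen by letting `S_P` act on the twisted monoid algebra `k^σ[ℕ^n]`.
Leading exponents for the lexicographic order and for its reverse add under multiplication, so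
`S_P` is a domain and `w z = z x^e` with `z ≠ 0` forces `w = μ x^e`. Normality of `z` thus gives
`z x^e = μ_e x^e z` for every `e`, and comparing the coefficients of the distinct monomials
`x^{d_j + e}` shows that each component satisfies `z_j x^e = μ_e x^e z_j` as well. As the monomials
span, for every `a` some `b` satisfies both `z a = b z` and `z_j a = b z_j`; cancelling `z`
identifies `b` with `η_z(a)`.
-/

variable {k : Type*} [Field k] {n : ℕ}

/-- The defining relations `x_j x_i = p_{ij} x_i x_j` of the skew polynomial ring. -/
def skewRel (p : Fin n → Fin n → k) :
    FreeAlgebra k (Fin n) → FreeAlgebra k (Fin n) → Prop := fun u v =>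
  ∃ i j : Fin n, u = FreeAlgebra.ι k j * FreeAlgebra.ι k i ∧
    v = p i j • (FreeAlgebra.ι k i * FreeAlgebra.ι k j)

/-- The skew polynomial ring `S_P = k_P[x_1, …, x_n]`. -/
abbrev SkewPoly (p : Fin n → Fin n → k) := RingQuot (skewRel p)

/-- The generator `x_i` of the skew polynomial ring. -/
def skewX (p : Fin n → Fin n → k) (i : Fin n) : SkewPoly p :=
  RingQuot.mkRingHom (skewRel p) (FreeAlgebra.ι k i)

/-- The ordered monomial `x_1^{a_1} ⋯ x_n^{a_n}`. -/
def skewMonomial (p : Fin n → Fin n → k) (a : Fin n → ℕ) : SkewPoly p :=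
  (List.ofFn fun i => skewX p i ^ a i).prod

section CommonTwist

/- With `η_z` given by `z a = η_z(a) z`, the hypothesis `∀ a, ∃ b, z * a = b * z ∧ y * a = b * y`
below says that `y a = η_z(a) y` for all `a`. -/

variable {R : Type*} {z y : R}

lemma exists_common_mul_eq_of_span_eq_top {K : Type*} [CommSemiring K] [Semiring R]
    [Algebra K R] {s : Set R} (hs : Submodule.span K s = ⊤)
    (h : ∀ m ∈ s, ∃ b, z * m = b * z ∧ y * m = b * y) (a : R) :
    ∃ b, z * a = b * z ∧ y * a = b * y := by
  induction (hs ▸ Submodule.mem_top : a ∈ Submodule.span K s)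
    using Submodule.span_induction with
  | mem m hm => exact h m hm
  | zero => exact ⟨0, by simp⟩
  | add a a' _ _ ha ha' =>
    obtain ⟨b, hzb, hyb⟩ := ha
    obtain ⟨b', hzb', hyb'⟩ := ha'
    exact ⟨b + b', by simp only [mul_add, add_mul, hzb, hzb', hyb, hyb', and_self]⟩
  | smul r a _ ha =>
    obtain ⟨b, hzb, hyb⟩ := ha
    exact ⟨r • b, by simp only [mul_smul_comm, smul_mul_assoc, hzb, hyb, and_self]⟩

variable [Ring R] [NoZeroDivisors R]

lemma mul_eq_mul_of_common_mul_eq (hz : z ≠ 0) (h : ∀ a, ∃ b, z * a = b * z ∧ y * a = b * y)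
    {a w : R} (hw : z * a = w * z) : y * a = w * y := by
  obtain ⟨b, hzb, hyb⟩ := h a
  rw [hyb, mul_right_cancel₀ hz (hzb.symm.trans hw)]

lemma range_mul_eq_range_mul_of_common_mul_eq (hz : z ≠ 0)
    (hnormal : Set.range (fun w => w * z) = Set.range (fun w => z * w))
    (h : ∀ a, ∃ b, z * a = b * z ∧ y * a = b * y) :
    Set.range (fun w => w * y) = Set.range (fun w => y * w) := by
  ext x
  constructor
  · rintro ⟨w, rfl⟩
    obtain ⟨a, ha⟩ : w * z ∈ Set.range (fun a => z * a) := hnormal ▸ ⟨w, rfl⟩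
    exact ⟨a, mul_eq_mul_of_common_mul_eq hz h ha⟩
  · rintro ⟨a, rfl⟩
    obtain ⟨b, -, hyb⟩ := h a
    exact ⟨b, hyb.symm⟩

end CommonTwist

section Twist

variable (p : Fin n → Fin n → k)

/-- The bicharacter `σ` with `x^a x^b = σ(a, b) x^{a+b}` in `S_P`. -/
def twist (a b : Fin n → ℕ) : k :=
  ∏ l : Fin n, ∏ m : Fin n, if m < l then p m l ^ (a l * b m) else 1

lemma twist_zero_left (b : Fin n → ℕ) : twist p 0 b = 1 := by
  simp [twist]

lemma twist_zero_right (a : Fin n → ℕ) : twist p a 0 = 1 := by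
  simp [twist]

lemma twist_add_left (a a' b : Fin n → ℕ) :
    twist p (a + a') b = twist p a b * twist p a' b := by
  simp only [twist, ← Finset.prod_mul_distrib]
  refine Finset.prod_congr rfl fun l _ => Finset.prod_congr rfl fun m _ => ?_
  split_ifs <;> simp [add_mul, pow_add]

lemma twist_add_right (a b b' : Fin n → ℕ) :
    twist p a (b + b') = twist p a b * twist p a b' := by
  simp only [twist, ← Finset.prod_mul_distrib]
  refine Finset.prod_congr rfl fun l _ => Finset.prod_congr rfl fun m _ => ?_
  split_ifs <;> simp [mul_add, pow_add]

lemma twist_ne_zero (hp : ∀ i j, p i j * p j i = 1) (a b : Fin n → ℕ) :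
    twist p a b ≠ 0 :=
  Finset.prod_ne_zero_iff.2 fun l _ => Finset.prod_ne_zero_iff.2 fun m _ => by
    split_ifs
    · exact pow_ne_zero _ (left_ne_zero_of_mul_eq_one (hp m l))
    · exact one_ne_zero

lemma twist_single_right (a : Fin n → ℕ) (i : Fin n) :
    twist p a (Pi.single i 1) = ∏ l : Fin n, if i < l then p i l ^ a l else 1 := by
  refine Finset.prod_congr rfl fun l _ => ?_
  rw [Fintype.prod_eq_single i fun m hm => by simp [Pi.single_eq_of_ne hm]]
  simp

lemma twist_single_single (hp : ∀ i j, p i j * p j i = 1) (hpdiag : ∀ i, p i i = 1)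
    (i j : Fin n) :
    twist p (Pi.single j 1) (Pi.single i 1) =
      p i j * twist p (Pi.single i 1) (Pi.single j 1) := by
  simp only [twist_single_right]
  rw [Fintype.prod_eq_single j fun l hl => by simp [Pi.single_eq_of_ne hl],
    Fintype.prod_eq_single i fun l hl => by simp [Pi.single_eq_of_ne hl]]
  rcases lt_trichotomy i j with h | rfl | h
  · simp [h, h.not_gt]
  · simp [hpdiag]
  · simp [h, h.not_gt, hp]

end Twist

section TwistMul

variable (p : Fin n → Fin n → k)

/-- Multiplication of the twisted monoid algebra `k^σ[ℕ^n]`, on coefficient functions. -/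
noncomputable def twistMul :
    ((Fin n → ℕ) →₀ k) →ₗ[k] ((Fin n → ℕ) →₀ k) →ₗ[k] ((Fin n → ℕ) →₀ k) :=
  Finsupp.lsum k fun a => LinearMap.toSpanSingleton k _
    (Finsupp.lsum k fun b =>
      LinearMap.toSpanSingleton k _ (Finsupp.single (a + b) (twist p a b)))

lemma twistMul_single_single (a b : Fin n → ℕ) (r s : k) :
    twistMul p (Finsupp.single a r) (Finsupp.single b s) =
      Finsupp.single (a + b) (r * s * twist p a b) := by
  simp only [twistMul, Finsupp.lsum_single, LinearMap.smul_apply, LinearMap.toSpanSingleton_apply,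
    Finsupp.smul_single, smul_eq_mul, mul_assoc]

lemma twistMul_eq_sum (f g : (Fin n → ℕ) →₀ k) :
    twistMul p f g =
      f.sum fun a r => g.sum fun b s => Finsupp.single (a + b) (r * s * twist p a b) := by
  conv_lhs => rw [← f.sum_single, ← g.sum_single]
  simp only [map_finsuppSum, LinearMap.finsupp_sum_apply, twistMul_single_single]
  exact Finsupp.sum_comm _ _ _

lemma twistMul_assoc (f g h : (Fin n → ℕ) →₀ k) :
    twistMul p (twistMul p f g) h = twistMul p f (twistMul p g h) := by
  induction f using Finsupp.induction_linear with
  | zero => simp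
  | add f f' hf hf' => simp only [map_add, LinearMap.add_apply, hf, hf']
  | single a r =>
  induction g using Finsupp.induction_linear with
  | zero => simp
  | add g g' hg hg' => simp only [map_add, LinearMap.add_apply, hg, hg']
  | single b s =>
  induction h using Finsupp.induction_linear with
  | zero => simp
  | add h h' hh hh' => simp only [map_add, hh, hh']
  | single c t =>
    simp only [twistMul_single_single, add_assoc, twist_add_left, twist_add_right]
    congr 1
    ring

lemma twistMul_single_zero_one_left (f : (Fin n → ℕ) →₀ k) :
    twistMul p (Finsupp.single 0 1) f = f := by
  induction f using Finsupp.induction_linear with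
  | zero => simp
  | add f g hf hg => simp only [map_add, hf, hg]
  | single b s => simp [twistMul_single_single, twist_zero_left]

lemma twistMul_single_zero_one_right (f : (Fin n → ℕ) →₀ k) :
    twistMul p f (Finsupp.single 0 1) = f := by
  induction f using Finsupp.induction_linear with
  | zero => simp
  | add f g hf hg => simp only [map_add, LinearMap.add_apply, hf, hg]
  | single b s => simp [twistMul_single_single, twist_zero_right]

end TwistMul

section Degree

variable (p : Fin n → Fin n → k) {B : Type*} [AddCommMonoid B] [LinearOrder B]
  [IsOrderedCancelAddMonoid B] {D : (Fin n → ℕ) → B}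

lemma exists_add_eq_of_mem_support_twistMul {f g : (Fin n → ℕ) →₀ k} {x : Fin n → ℕ}
    (hx : x ∈ (twistMul p f g).support) : ∃ a ∈ f.support, ∃ b ∈ g.support, a + b = x := by
  classical
  rw [twistMul_eq_sum] at hx
  obtain ⟨a, ha, hx⟩ := Finset.mem_biUnion.1 (Finsupp.support_sum hx)
  obtain ⟨b, hb, hx⟩ := Finset.mem_biUnion.1 (Finsupp.support_sum hx)
  exact ⟨a, ha, b, hb, (Finset.mem_singleton.1 (Finsupp.support_single_subset hx)).symm⟩

lemma isMaxOn_support_twistMul (hadd : ∀ a b, D (a + b) = D a + D b)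
    {f g : (Fin n → ℕ) →₀ k} {a b : Fin n → ℕ}
    (hfa : IsMaxOn D f.support a) (hgb : IsMaxOn D g.support b) :
    IsMaxOn D (twistMul p f g).support (a + b) := by
  intro x hx
  obtain ⟨a', ha', b', hb', rfl⟩ := exists_add_eq_of_mem_support_twistMul p hx
  show D (a' + b') ≤ D (a + b)
  rw [hadd, hadd]
  exact add_le_add (hfa ha') (hgb hb')

lemma twistMul_apply_add_of_isMaxOn (hD : Function.Injective D)
    (hadd : ∀ a b, D (a + b) = D a + D b) {f g : (Fin n → ℕ) →₀ k} {a b : Fin n → ℕ}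
    (ha : a ∈ f.support) (hfa : IsMaxOn D f.support a)
    (hb : b ∈ g.support) (hgb : IsMaxOn D g.support b) :
    twistMul p f g (a + b) = f a * g b * twist p a b := by
  have huniq : ∀ a' ∈ f.support, ∀ b' ∈ g.support, a' + b' = a + b → a' = a ∧ b' = b := by
    intro a' ha' b' hb' h
    have := (add_eq_add_iff_eq_and_eq (hfa ha') (hgb hb')).1 (by rw [← hadd, ← hadd, h])
    exact ⟨hD this.1, hD this.2⟩
  rw [twistMul_eq_sum, Finsupp.sum_apply, Finsupp.sum, Finset.sum_eq_single_of_mem a ha,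
    Finsupp.sum_apply, Finsupp.sum, Finset.sum_eq_single_of_mem b hb, Finsupp.single_eq_same]
  · exact fun b' hb' hne => Finsupp.single_eq_of_ne fun h => hne (huniq a ha b' hb' h.symm).2
  · refine fun a' ha' hne => ?_
    rw [Finsupp.sum_apply]
    exact Finset.sum_eq_zero fun b' hb' =>
      Finsupp.single_eq_of_ne fun h => hne (huniq a' ha' b' hb' h.symm).1

lemma add_mem_support_twistMul (hp : ∀ i j, p i j * p j i = 1) (hD : Function.Injective D)
    (hadd : ∀ a b, D (a + b) = D a + D b) {f g : (Fin n → ℕ) →₀ k} {a b : Fin n → ℕ}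
    (ha : a ∈ f.support) (hfa : IsMaxOn D f.support a)
    (hb : b ∈ g.support) (hgb : IsMaxOn D g.support b) :
    a + b ∈ (twistMul p f g).support := by
  rw [Finsupp.mem_support_iff, twistMul_apply_add_of_isMaxOn p hD hadd ha hfa hb hgb]
  exact mul_ne_zero (mul_ne_zero (Finsupp.mem_support_iff.1 ha) (Finsupp.mem_support_iff.1 hb))
    (twist_ne_zero p hp a b)

lemma twistMul_ne_zero (hp : ∀ i j, p i j * p j i = 1) {f g : (Fin n → ℕ) →₀ k}
    (hf : f ≠ 0) (hg : g ≠ 0) : twistMul p f g ≠ 0 := by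
  obtain ⟨a, ha, hfa⟩ := f.support.exists_max_image toLex (Finsupp.support_nonempty_iff.2 hf)
  obtain ⟨b, hb, hgb⟩ := g.support.exists_max_image toLex (Finsupp.support_nonempty_iff.2 hg)
  intro h
  have hab := add_mem_support_twistMul p hp toLex.injective (fun _ _ => rfl) ha hfa hb hgb
  simp [h] at hab

lemma le_of_twistMul_eq_twistMul_single (hp : ∀ i j, p i j * p j i = 1)
    (hD : Function.Injective D) (hadd : ∀ a b, D (a + b) = D a + D b)
    {w z : (Fin n → ℕ) →₀ k} {e s : Fin n → ℕ} (hz : z ≠ 0)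
    (h : twistMul p w z = twistMul p z (Finsupp.single e 1)) (hs : s ∈ w.support) :
    D s ≤ D e := by
  obtain ⟨a, ha, hwa⟩ := w.support.exists_max_image D ⟨s, hs⟩
  obtain ⟨m, hm, hzm⟩ := z.support.exists_max_image D (Finsupp.support_nonempty_iff.2 hz)
  have he : e ∈ (Finsupp.single e (1 : k)).support := by simp
  have hem : IsMaxOn D (Finsupp.single e (1 : k)).support e := fun x hx =>
    (congrArg D (Finset.mem_singleton.1 (Finsupp.support_single_subset hx))).le
  have ham := add_mem_support_twistMul p hp hD hadd ha hwa hm hzm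
  have hme := add_mem_support_twistMul p hp hD hadd hm hzm he hem
  rw [h] at ham
  rw [← h] at hme
  have hDeq : D (a + m) = D (m + e) :=
    le_antisymm (isMaxOn_support_twistMul p hadd hzm hem ham)
      (isMaxOn_support_twistMul p hadd hwa hzm hme)
  rw [hadd, hadd, add_comm (D m)] at hDeq
  exact (hwa s hs).trans (add_right_cancel hDeq).le

lemma eq_single_of_twistMul_eq_twistMul_single (hp : ∀ i j, p i j * p j i = 1)
    {w z : (Fin n → ℕ) →₀ k} {e : Fin n → ℕ} (hz : z ≠ 0)
    (h : twistMul p w z = twistMul p z (Finsupp.single e 1)) :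
    w = Finsupp.single e (w e) := by
  refine Finsupp.support_subset_singleton.1 fun s hs => Finset.mem_singleton.2 ?_
  -- the lexicographic order bounds the top exponent of `w`, its dual the bottom one
  have hle := le_of_twistMul_eq_twistMul_single p hp (D := toLex) toLex.injective
    (fun _ _ => rfl) hz h hs
  have hge := le_of_twistMul_eq_twistMul_single p hp (D := fun a => OrderDual.toDual (toLex a))
    (OrderDual.toDual.injective.comp toLex.injective) (fun _ _ => rfl) hz h hs
  exact toLex.injective (le_antisymm hle hge)

end Degree

section Straighten

variable (p : Fin n → Fin n → k)

lemma skewX_eq_mkAlgHom (i : Fin n) :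
    skewX p i = RingQuot.mkAlgHom k (skewRel p) (FreeAlgebra.ι k i) := by
  rw [skewX, ← RingQuot.mkAlgHom_coe k]
  rfl

lemma skewX_mul_skewX (i j : Fin n) :
    skewX p j * skewX p i = p i j • (skewX p i * skewX p j) := by
  have h := RingQuot.mkAlgHom_rel (S := k) (s := skewRel p) ⟨i, j, rfl, rfl⟩
  rw [map_mul, map_smul, map_mul] at h
  simpa [skewX_eq_mkAlgHom] using h

lemma skewX_pow_mul_skewX (i l : Fin n) (r : ℕ) :
    skewX p l ^ r * skewX p i = p i l ^ r • (skewX p i * skewX p l ^ r) := by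
  induction r with
  | zero => simp
  | succ r ih =>
    rw [pow_succ, mul_assoc, skewX_mul_skewX, mul_smul_comm, ← mul_assoc, ih, smul_mul_assoc,
      smul_smul, mul_assoc, ← pow_succ, ← pow_succ']

lemma list_prod_pow_mul_skewX (a : Fin n → ℕ) (i : Fin n) (L : List (Fin n)) :
    (L.map fun l => skewX p l ^ a l).prod * skewX p i =
      (L.map fun l => p i l ^ a l).prod •
        (skewX p i * (L.map fun l => skewX p l ^ a l).prod) := by
  induction L with
  | nil => simp
  | cons j L ih =>
    simp only [List.map_cons, List.prod_cons]
    rw [mul_assoc, ih, mul_smul_comm, ← mul_assoc, skewX_pow_mul_skewX, smul_mul_assoc,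
      smul_smul, mul_assoc, mul_comm]

/-- Straightening `x^a x_i` along an increasing list of variables: `x_i` passes the factors
`x_l^{a_l}` with `l > i` and is absorbed into `x_i^{a_i}`. -/
lemma list_prod_pow_mul_skewX_of_mem (a : Fin n → ℕ) (i : Fin n) (L : List (Fin n))
    (hL : L.Pairwise (· < ·)) (hi : i ∈ L) :
    (L.map fun l => skewX p l ^ a l).prod * skewX p i =
      (L.map fun l => if i < l then p i l ^ a l else 1).prod •
        (L.map fun l => skewX p l ^ (a + Pi.single i 1 : Fin n → ℕ) l).prod := by
  induction L with
  | nil => simp at hi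
  | cons j L ih =>
    rw [List.pairwise_cons] at hL
    simp only [List.map_cons, List.prod_cons]
    rcases List.mem_cons.1 hi with rfl | hi
    · have hscalar : (L.map fun l => if i < l then p i l ^ a l else 1) =
          L.map fun l => p i l ^ a l :=
        List.map_congr_left fun l hl => if_pos (hL.1 l hl)
      have hrest : (L.map fun l => skewX p l ^ (a + Pi.single i 1 : Fin n → ℕ) l) =
          L.map fun l => skewX p l ^ a l :=
        List.map_congr_left fun l hl => by
          simp [Pi.single_eq_of_ne (hL.1 l hl).ne']
      rw [mul_assoc, list_prod_pow_mul_skewX, mul_smul_comm, ← mul_assoc, ← pow_succ,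
        hscalar, hrest, if_neg (lt_irrefl i), one_mul]
      simp
    · have hji : j < i := hL.1 i hi
      rw [mul_assoc, ih hL.2 hi, mul_smul_comm, if_neg hji.not_gt, one_mul]
      simp [Pi.single_eq_of_ne hji.ne]

lemma skewMonomial_mul_skewX (a : Fin n → ℕ) (i : Fin n) :
    skewMonomial p a * skewX p i =
      twist p a (Pi.single i 1) • skewMonomial p (a + Pi.single i 1) := by
  simp only [skewMonomial, List.ofFn_eq_map]
  rw [list_prod_pow_mul_skewX_of_mem p a i _ (List.pairwise_lt_finRange n) (List.mem_finRange i),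
    twist_single_right, Fin.prod_univ_def]

lemma skewMonomial_zero : skewMonomial p 0 = 1 := by
  simp [skewMonomial]

end Straighten

section Coeffs

variable (p : Fin n → Fin n → k)

lemma adjoin_range_skewX : Algebra.adjoin k (Set.range (skewX p)) = ⊤ := by
  rw [show skewX p = RingQuot.mkAlgHom k (skewRel p) ∘ FreeAlgebra.ι k from
      funext (skewX_eq_mkAlgHom p), Set.range_comp, ← AlgHom.map_adjoin,
    FreeAlgebra.adjoin_range_ι, Algebra.map_top, AlgHom.range_eq_top]
  exact RingQuot.mkAlgHom_surjective k _

/-- The span of the monomials is a right ideal containing `1`. -/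
lemma span_skewMonomial : Submodule.span k (Set.range (skewMonomial p)) = ⊤ := by
  set M := Submodule.span k (Set.range (skewMonomial p))
  have hmul : ∀ u, ∀ m ∈ M, m * u ∈ M := by
    intro u
    induction (adjoin_range_skewX p ▸ Algebra.mem_top : u ∈ Algebra.adjoin k _)
      using Algebra.adjoin_induction with
    | mem x hx =>
      obtain ⟨i, rfl⟩ := hx
      intro m hm
      induction hm using Submodule.span_induction with
      | mem y hy =>
        obtain ⟨a, rfl⟩ := hy
        rw [skewMonomial_mul_skewX]
        exact M.smul_mem _ (Submodule.subset_span ⟨_, rfl⟩)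
      | zero => simp
      | add y y' _ _ hy hy' => simpa [add_mul] using M.add_mem hy hy'
      | smul r y _ hy => simpa [smul_mul_assoc] using M.smul_mem r hy
    | algebraMap r =>
      intro m hm
      rw [← Algebra.commutes, ← Algebra.smul_def]
      exact M.smul_mem r hm
    | add u u' _ _ hu hu' =>
      exact fun m hm => by simpa [mul_add] using M.add_mem (hu m hm) (hu' m hm)
    | mul u u' _ _ hu hu' => exact fun m hm => by simpa [mul_assoc] using hu' _ (hu m hm)
  refine Submodule.eq_top_iff'.2 fun u => ?_
  simpa using hmul u 1 (Submodule.subset_span ⟨0, skewMonomial_zero p⟩)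

variable (hp : ∀ i j, p i j * p j i = 1) (hpdiag : ∀ i, p i i = 1)

/-- The left regular representation of `S_P` on the twisted monoid algebra `k^σ[ℕ^n]`. -/
noncomputable def regularRep :
    SkewPoly p →ₐ[k] Module.End k ((Fin n → ℕ) →₀ k) :=
  RingQuot.liftAlgHom k
    ⟨FreeAlgebra.lift k fun i => twistMul p (Finsupp.single (Pi.single i 1) 1), by
      rintro _ _ ⟨i, j, rfl, rfl⟩
      have hL : ∀ f g, twistMul p f * twistMul p g = twistMul p (twistMul p f g) :=
        fun f g => LinearMap.ext fun h => (twistMul_assoc p f g h).symm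
      rw [map_mul, map_smul, map_mul, FreeAlgebra.lift_ι_apply, FreeAlgebra.lift_ι_apply, hL, hL,
        twistMul_single_single, twistMul_single_single, ← map_smul, Finsupp.smul_single,
        twist_single_single p hp hpdiag, add_comm (Pi.single j 1)]
      simp only [one_mul, smul_eq_mul]⟩

/-- The coefficients of `u` in the monomial basis, read off as `u • 1` in `k^σ[ℕ^n]`. -/
noncomputable def coeffs :
    SkewPoly p →ₗ[k] ((Fin n → ℕ) →₀ k) :=
  (LinearMap.applyₗ (Finsupp.single 0 1)).comp (regularRep p hp hpdiag).toLinearMap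

lemma coeffs_apply (u : SkewPoly p) :
    coeffs p hp hpdiag u = regularRep p hp hpdiag u (Finsupp.single 0 1) :=
  rfl

lemma regularRep_skewX (i : Fin n) :
    regularRep p hp hpdiag (skewX p i) = twistMul p (Finsupp.single (Pi.single i 1) 1) := by
  rw [skewX_eq_mkAlgHom, regularRep, RingQuot.liftAlgHom_mkAlgHom_apply,
    FreeAlgebra.lift_ι_apply]

lemma regularRep_apply (u : SkewPoly p) (v : (Fin n → ℕ) →₀ k) :
    regularRep p hp hpdiag u v = twistMul p (coeffs p hp hpdiag u) v := by
  induction (adjoin_range_skewX p ▸ Algebra.mem_top : u ∈ Algebra.adjoin k _)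
    using Algebra.adjoin_induction generalizing v with
  | mem x hx =>
    obtain ⟨i, rfl⟩ := hx
    rw [coeffs_apply, regularRep_skewX, twistMul_single_zero_one_right]
  | algebraMap r =>
    rw [coeffs_apply, AlgHom.commutes, Module.algebraMap_end_apply, Module.algebraMap_end_apply,
      map_smul, LinearMap.smul_apply, twistMul_single_zero_one_left]
  | add u u' _ _ hu hu' =>
    simp only [map_add, LinearMap.add_apply, hu, hu']
  | mul u u' _ _ hu hu' =>
    rw [map_mul, Module.End.mul_apply, hu', hu, coeffs_apply p hp hpdiag (u * u'), map_mul,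
      Module.End.mul_apply, ← coeffs_apply, hu, twistMul_assoc]

lemma coeffs_mul (u v : SkewPoly p) :
    coeffs p hp hpdiag (u * v) = twistMul p (coeffs p hp hpdiag u) (coeffs p hp hpdiag v) := by
  rw [coeffs_apply, map_mul, Module.End.mul_apply, regularRep_apply]
  rfl

lemma coeffs_skewMonomial (a : Fin n → ℕ) :
    coeffs p hp hpdiag (skewMonomial p a) = Finsupp.single a 1 := by
  induction hN : ∑ i, a i generalizing a with
  | zero =>
    obtain rfl : a = 0 := funext fun i => Finset.sum_eq_zero_iff.1 hN i (Finset.mem_univ i)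
    simp [skewMonomial_zero, coeffs_apply]
  | succ N ih =>
    obtain ⟨i, hi⟩ : ∃ i, a i ≠ 0 := by
      by_contra! h
      simp [h] at hN
    obtain ⟨a, rfl⟩ : ∃ a', a = a' + Pi.single i 1 :=
      ⟨a - Pi.single i 1, funext fun l => by
        by_cases hl : l = i
        · subst hl
          simp only [Pi.add_apply, Pi.sub_apply, Pi.single_eq_same]
          omega
        · simp [hl]⟩
    have hdeg : ∑ l, a l = N := by
      simpa [Finset.sum_add_distrib] using hN
    have key := congrArg (coeffs p hp hpdiag) (skewMonomial_mul_skewX p a i)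
    rw [coeffs_mul, ih a hdeg, coeffs_apply, regularRep_skewX, twistMul_single_zero_one_right,
      twistMul_single_single, map_smul, mul_one, one_mul] at key
    apply smul_right_injective _ (twist_ne_zero p hp a (Pi.single i 1))
    dsimp only
    rw [← key, Finsupp.smul_single, smul_eq_mul, mul_one]

lemma coeffs_injective : Function.Injective (coeffs p hp hpdiag) := by
  have h : (Finsupp.linearCombination k (skewMonomial p)).comp (coeffs p hp hpdiag) =
      LinearMap.id :=
    LinearMap.ext_on_range (span_skewMonomial p) fun a => by simp [coeffs_skewMonomial]
  exact Function.LeftInverse.injective (g := Finsupp.linearCombination k (skewMonomial p))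
    (LinearMap.congr_fun h)

end Coeffs

section Basis

variable (p : Fin n → Fin n → k)

lemma linearIndependent_skewMonomial (hp : ∀ i j, p i j * p j i = 1)
    (hpdiag : ∀ i, p i i = 1) : LinearIndependent k (skewMonomial p) := by
  refine LinearIndependent.of_comp (coeffs p hp hpdiag) ?_
  convert Finsupp.linearIndependent_single_one k (Fin n → ℕ) with a
  exact coeffs_skewMonomial p hp hpdiag a

lemma skewMonomial_mul_skewMonomial (hp : ∀ i j, p i j * p j i = 1)
    (hpdiag : ∀ i, p i i = 1) (a b : Fin n → ℕ) :
    skewMonomial p a * skewMonomial p b = twist p a b • skewMonomial p (a + b) := by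
  apply coeffs_injective p hp hpdiag
  rw [coeffs_mul, map_smul, coeffs_skewMonomial, coeffs_skewMonomial, coeffs_skewMonomial,
    twistMul_single_single, Finsupp.smul_single, smul_eq_mul, mul_one, one_mul, mul_one]

lemma SkewPoly.noZeroDivisors (hp : ∀ i j, p i j * p j i = 1)
    (hpdiag : ∀ i, p i i = 1) : NoZeroDivisors (SkewPoly p) where
  eq_zero_or_eq_zero_of_mul_eq_zero {u v} h := by
    have hc := congrArg (coeffs p hp hpdiag) h
    rw [coeffs_mul, map_zero] at hc
    by_contra! huv
    exact twistMul_ne_zero p hp ((map_ne_zero_iff _ (coeffs_injective p hp hpdiag)).2 huv.1)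
      ((map_ne_zero_iff _ (coeffs_injective p hp hpdiag)).2 huv.2) hc

lemma exists_eq_smul_skewMonomial_of_mul_eq (hp : ∀ i j, p i j * p j i = 1)
    (hpdiag : ∀ i, p i i = 1)     {w z : SkewPoly p} {e : Fin n → ℕ} (hz : z ≠ 0)
    (h : w * z = z * skewMonomial p e) : ∃ μ : k, w = μ • skewMonomial p e := by
  have hc := congrArg (coeffs p hp hpdiag) h
  rw [coeffs_mul, coeffs_mul, coeffs_skewMonomial] at hc
  refine ⟨coeffs p hp hpdiag w e, coeffs_injective p hp hpdiag ?_⟩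
  rw [map_smul, coeffs_skewMonomial, Finsupp.smul_single, smul_eq_mul, mul_one]
  exact eq_single_of_twistMul_eq_twistMul_single p hp
    ((map_ne_zero_iff _ (coeffs_injective p hp hpdiag)).2 hz) hc


lemma smul_skewMonomial_mul_eq_of_sum_mul_eq (hp : ∀ i j, p i j * p j i = 1)
    (hpdiag : ∀ i, p i i = 1) {N : ℕ} {c : Fin N → k} {d : Fin N → Fin n → ℕ}
    (hd : Function.Injective d) {e : Fin n → ℕ} {μ : k}
    (h : (∑ j, c j • skewMonomial p (d j)) * skewMonomial p e =
      (μ • skewMonomial p e) * ∑ j, c j • skewMonomial p (d j)) (j : Fin N) :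
    (c j • skewMonomial p (d j)) * skewMonomial p e =
      (μ • skewMonomial p e) * (c j • skewMonomial p (d j)) := by
  have hleft : ∀ j, (c j • skewMonomial p (d j)) * skewMonomial p e =
      (c j * twist p (d j) e) • skewMonomial p (d j + e) := fun j => by
    rw [smul_mul_assoc, skewMonomial_mul_skewMonomial p hp hpdiag, smul_smul]
  have hright : ∀ j, (μ • skewMonomial p e) * (c j • skewMonomial p (d j)) =
      (μ * c j * twist p e (d j)) • skewMonomial p (d j + e) := fun j => by
    rw [smul_mul_smul_comm, skewMonomial_mul_skewMonomial p hp hpdiag, smul_smul, add_comm e]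
  have hindep : LinearIndependent k fun j => skewMonomial p (d j + e) :=
    (linearIndependent_skewMonomial p hp hpdiag).comp _ fun _ _ h => hd (add_right_cancel h)
  rw [Finset.sum_mul, Finset.mul_sum] at h
  simp only [hleft, hright] at h
  rw [hleft, hright, Fintype.linearIndependent_iffₛ.1 hindep _ _ h j]

end Basis

theorem skewPoly_homogeneous_components_normal_general (p : Fin n → Fin n → k)
    (hp : ∀ i j, p i j * p j i = 1) (hpdiag : ∀ i, p i i = 1)
    (z : SkewPoly p) (hz0 : z ≠ 0)
    (hznormal : Set.range (fun w => w * z) = Set.range (fun w => z * w))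
    (N : ℕ) (c : Fin N → k) (d : Fin N → Fin n → ℕ)
    (hd : Function.Injective d)
    (hdecomp : z = ∑ j : Fin N, c j • skewMonomial p (d j)) :
    (∀ j : Fin N,
        Set.range (fun w => w * (c j • skewMonomial p (d j))) =
          Set.range (fun w => (c j • skewMonomial p (d j)) * w)) ∧
    (∀ (a w : SkewPoly p), z * a = w * z →
        ∀ j : Fin N, (c j • skewMonomial p (d j)) * a = w * (c j • skewMonomial p (d j))) := by
  have := SkewPoly.noZeroDivisors p hp hpdiag
  have hmonomial : ∀ m ∈ Set.range (skewMonomial p), ∃ b, z * m = b * z ∧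
      ∀ j, (c j • skewMonomial p (d j)) * m = b * (c j • skewMonomial p (d j)) := by
    rintro _ ⟨e, rfl⟩
    obtain ⟨w, hw⟩ : z * skewMonomial p e ∈ Set.range (fun w => w * z) := hznormal ▸ ⟨_, rfl⟩
    obtain ⟨μ, rfl⟩ := exists_eq_smul_skewMonomial_of_mul_eq p hp hpdiag hz0 hw
    exact ⟨_, hw.symm,
      smul_skewMonomial_mul_eq_of_sum_mul_eq p hp hpdiag hd (hdecomp ▸ hw.symm)⟩
  have hcommon : ∀ j a, ∃ b, z * a = b * z ∧
      (c j • skewMonomial p (d j)) * a = b * (c j • skewMonomial p (d j)) := fun j =>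
    exists_common_mul_eq_of_span_eq_top (span_skewMonomial p) fun m hm =>
      (hmonomial m hm).imp fun _ hb => ⟨hb.1, hb.2 j⟩
  exact ⟨fun j => range_mul_eq_range_mul_of_common_mul_eq hz0 hznormal (hcommon j),
    fun a w hw j => mul_eq_mul_of_common_mul_eq hz0 (hcommon j) hw⟩

/-- Let `z` be a nonzero normal element of the skew polynomial ring `S_P`, with
decomposition `z = z_1 + ⋯ + z_N` into its nonzero `ℕ^n`-homogeneous components
`z_j = c_j • x^{d_j}` (the degrees `d_j` pairwise distinct).  Then each `z_j` is
normal and `η_{z_j} = η_z`, i.e. whenever `z * a = w * z` we have `z_j * a = w * z_j`. -/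
theorem skewPoly_homogeneous_components_normal (p : Fin n → Fin n → k)
    (hp : ∀ i j, p i j * p j i = 1) (hpdiag : ∀ i, p i i = 1)
    (z : SkewPoly p) (hz0 : z ≠ 0)
    (hznormal : Set.range (fun w => w * z) = Set.range (fun w => z * w))
    (N : ℕ) (c : Fin N → k) (d : Fin N → Fin n → ℕ)
    (hc : ∀ j, c j ≠ 0) (hd : Function.Injective d)
    (hdecomp : z = ∑ j : Fin N, c j • skewMonomial p (d j)) :
    (∀ j : Fin N,
        Set.range (fun w => w * (c j • skewMonomial p (d j))) =
          Set.range (fun w => (c j • skewMonomial p (d j)) * w)) ∧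
    (∀ (a w : SkewPoly p), z * a = w * z →
        ∀ j : Fin N, (c j • skewMonomial p (d j)) * a = w * (c j • skewMonomial p (d j))) :=
  skewPoly_homogeneous_components_normal_general p hp hpdiag z hz0 hznormal N c d hd hdecomp
end

section
/- Let z be a nonzero normal element of the skew polynomial ring S_P = k_P[x_1,…,x_n]. Then for each i there exists λ_i ∈ k^× such that η_{x_i}(z) = λ_i z, i.e., x_i z = λ_i z x_i. -/
variable {k : Type*} [Field k] {n : ℕ}

/-!
Expand elements of `S_P` in the ordered monomials `x^b`, `b ∈ ℕ^n`; they form a basis because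
`S_P` acts on `k^(ℕ^n)` with `x_j` acting as a weighted shift by `e_j`. Left multiplication by
`x^a` sends `x^b` to a nonzero multiple of `x^(a+b)`, so for the lexicographic order the leading
and the trailing exponent of a product are the sums of those of the factors. Normality of `z`
gives `w` with `z w = x_i z`; comparing exponents yields `lead w = trail w = e_i`, hence
`w = λ x_i` and `x_i z = λ z x_i`.
-/

section SkewCommute

variable {R A : Type*} [CommSemiring R] [Semiring A] [Algebra R A]

theorem mul_pow_of_mul_eq_smul {x y : A} {c : R} (h : x * y = c • (y * x)) (m : ℕ) :
    x * y ^ m = c ^ m • (y ^ m * x) := by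
  induction m with
  | zero => simp
  | succ m ih =>
    rw [pow_succ, ← mul_assoc, ih, smul_mul_assoc, mul_assoc, h, mul_smul_comm, smul_smul,
      ← pow_succ, mul_assoc]

theorem mul_prod_ofFn_of_mul_eq_smul {m : ℕ} (x : A) (f : Fin m → A) (c : Fin m → R) (j : Fin m)
    (h : ∀ i < j, x * f i = c i • (f i * x)) :
    x * (List.ofFn f).prod =
      (∏ i, if i < j then c i else 1) • (List.ofFn (Function.update f j (x * f j))).prod := by
  induction m with
  | zero => exact j.elim0
  | succ m ih =>
    rw [List.ofFn_succ, List.ofFn_succ, List.prod_cons, List.prod_cons, Fin.prod_univ_succ]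
    cases j using Fin.cases with
    | zero =>
      simp [Fin.succ_ne_zero, mul_assoc]
    | succ j =>
      have h0 := h 0 (Fin.succ_pos j)
      have ht := ih (fun i => f i.succ) (fun i => c i.succ) j
        fun i hi => h i.succ (Fin.succ_lt_succ_iff.2 hi)
      have hupd : (fun i => Function.update f j.succ (x * f j.succ) i.succ) =
          Function.update (fun i => f i.succ) j (x * f j.succ) :=
        Function.update_comp_eq_of_injective f (Fin.succ_injective m) j _
      rw [← mul_assoc, h0, smul_mul_assoc, mul_assoc, ht, mul_smul_comm, smul_smul, hupd,
        Function.update_of_ne (Fin.succ_ne_zero j).symm, if_pos (Fin.succ_pos j)]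
      simp only [Fin.succ_lt_succ_iff]

end SkewCommute

section WeightedShift

open Finsupp
open scoped Pointwise

variable {R M : Type*} [CommSemiring R]

noncomputable def weightedShift [Add M] (a : M) (w : M → R) : Module.End R (M →₀ R) :=
  lsum R fun b => w b • lsingle (a + b)

@[simp]
theorem weightedShift_single [Add M] (a : M) (w : M → R) (b : M) (c : R) :
    weightedShift a w (single b c) = single (a + b) (w b * c) := by
  rw [weightedShift, lsum_single, LinearMap.smul_apply, lsingle_apply, smul_single, smul_eq_mul]

theorem weightedShift_mul_weightedShift [AddSemigroup M] (a a' : M) (w w' : M → R) :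
    weightedShift a w * weightedShift a' w' =
      weightedShift (a + a') fun b => w (a' + b) * w' b := by
  refine lhom_ext fun b c => ?_
  simp only [Module.End.mul_apply, weightedShift_single, add_assoc, mul_assoc]

theorem smul_weightedShift [Add M] (c : R) (a : M) (w : M → R) :
    c • weightedShift a w = weightedShift a (c • w) := by
  refine lhom_ext fun b d => ?_
  simp only [LinearMap.smul_apply, weightedShift_single, smul_single, Pi.smul_apply, smul_eq_mul,
    mul_assoc]

def IsWeightedShift [Add M] (T : Module.End R (M →₀ R)) (a : M) : Prop :=
  ∃ w : M → R, (∀ b, w b ≠ 0) ∧ T = weightedShift a w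

namespace IsWeightedShift

theorem one [AddMonoid M] [Nontrivial R] : IsWeightedShift (1 : Module.End R (M →₀ R)) 0 :=
  ⟨1, fun _ => one_ne_zero, lhom_ext fun b c => by simp⟩

variable [NoZeroDivisors R]

theorem mul [AddSemigroup M] {T S : Module.End R (M →₀ R)} {a a' : M}
    (hT : IsWeightedShift T a) (hS : IsWeightedShift S a') : IsWeightedShift (T * S) (a + a') := by
  obtain ⟨w, hw, rfl⟩ := hT
  obtain ⟨w', hw', rfl⟩ := hS
  exact ⟨_, fun b => mul_ne_zero (hw _) (hw' b), weightedShift_mul_weightedShift a a' w w'⟩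

theorem pow [AddMonoid M] [Nontrivial R] {T : Module.End R (M →₀ R)} {a : M}
    (hT : IsWeightedShift T a) (m : ℕ) : IsWeightedShift (T ^ m) (m • a) := by
  induction m with
  | zero => simpa using one
  | succ m ih => simpa [pow_succ', succ_nsmul'] using hT.mul ih

theorem list_prod_ofFn [AddCommMonoid M] [Nontrivial R] {m : ℕ} {T : Fin m → Module.End R (M →₀ R)}
    {a : Fin m → M} (h : ∀ i, IsWeightedShift (T i) (a i)) :
    IsWeightedShift (List.ofFn T).prod (∑ i, a i) := by
  induction m with
  | zero => simpa using one
  | succ m ih =>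
    rw [List.ofFn_succ, List.prod_cons, Fin.sum_univ_succ]
    exact (h 0).mul (ih fun i => h i.succ)

end IsWeightedShift

theorem sum_weightedShift_apply [AddCommMonoid M] (s : Finset M) (w : M → M → R) (v : M →₀ R) :
    (∑ a ∈ s, weightedShift a (w a)) v =
      ∑ x ∈ s ×ˢ v.support, single (x.1 + x.2) (w x.1 x.2 * v x.2) := by
  conv_lhs => rw [← v.sum_single]
  simp only [LinearMap.sum_apply, Finsupp.sum, map_sum, weightedShift_single,
    Finset.sum_product_right]

theorem support_sum_weightedShift_apply_subset [AddCommMonoid M] [DecidableEq M] (s : Finset M)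
    (w : M → M → R) (v : M →₀ R) :
    ((∑ a ∈ s, weightedShift a (w a)) v).support ⊆ s + v.support := by
  rw [sum_weightedShift_apply]
  refine support_finsetSum.trans (Finset.biUnion_subset.2 fun x hx => ?_)
  rw [Finset.mem_product] at hx
  exact support_single_subset.trans
    (Finset.singleton_subset_iff.2 (Finset.add_mem_add hx.1 hx.2))

theorem sum_weightedShift_apply_add_ne_zero [AddCommMonoid M] [NoZeroDivisors R]
    {s : Finset M} {w : M → M → R} {v : M →₀ R} {a₀ b₀ : M} (h : UniqueAdd s v.support a₀ b₀)
    (ha₀ : a₀ ∈ s) (hb₀ : b₀ ∈ v.support) (hw : w a₀ b₀ ≠ 0) :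
    (∑ a ∈ s, weightedShift a (w a)) v (a₀ + b₀) ≠ 0 := by
  rw [sum_weightedShift_apply, finsetSum_apply,
    Finset.sum_eq_single_of_mem (a₀, b₀) (Finset.mem_product.2 ⟨ha₀, hb₀⟩), single_eq_same]
  · exact mul_ne_zero hw (mem_support_iff.1 hb₀)
  rintro ⟨a, b⟩ hab hne
  rw [Finset.mem_product] at hab
  refine single_eq_of_ne fun heq => hne ?_
  obtain ⟨rfl, rfl⟩ := h hab.1 hab.2 heq.symm
  rfl

end WeightedShift

section Extremal

open scoped Pointwise

variable {M : Type*} [AddCommMonoid M] [LinearOrder M] [IsOrderedCancelAddMonoid M] [DecidableEq M]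
  {s t u : Finset M}

theorem Finset.uniqueAdd_max' (hs : s.Nonempty) (ht : t.Nonempty) :
    UniqueAdd s t (s.max' hs) (t.max' ht) := by
  intro a b ha hb hab
  have ha' := s.le_max' a ha
  have hb' := t.le_max' b hb
  obtain rfl : a = s.max' hs := by
    by_contra hne
    exact (add_lt_add_of_lt_of_le (lt_of_le_of_ne ha' hne) hb').ne hab
  exact ⟨rfl, add_left_cancel hab⟩

theorem Finset.uniqueAdd_min' (hs : s.Nonempty) (ht : t.Nonempty) :
    UniqueAdd s t (s.min' hs) (t.min' ht) := by
  intro a b ha hb hab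
  have ha' := s.min'_le a ha
  have hb' := t.min'_le b hb
  obtain rfl : a = s.min' hs := by
    by_contra hne
    exact (add_lt_add_of_lt_of_le (lt_of_le_of_ne ha' (Ne.symm hne)) hb').ne' hab
  exact ⟨rfl, add_left_cancel hab⟩

theorem Finset.max_eq_max_add_max (hu : u ⊆ s + t)
    (huniq : ∀ a ∈ s, ∀ b ∈ t, UniqueAdd s t a b → a + b ∈ u) : u.max = s.max + t.max := by
  rcases s.eq_empty_or_nonempty with rfl | hs
  · simp [Finset.subset_empty.1 (by simpa using hu)]
  rcases t.eq_empty_or_nonempty with rfl | ht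
  · simp [Finset.subset_empty.1 (by simpa using hu)]
  have hmem := huniq _ (s.max'_mem hs) _ (t.max'_mem ht) (uniqueAdd_max' hs ht)
  rw [← coe_max' hs, ← coe_max' ht, ← WithBot.coe_add]
  refine le_antisymm (Finset.max_le fun x hx => ?_) (le_max hmem)
  obtain ⟨a, ha, b, hb, rfl⟩ := mem_add.1 (hu hx)
  exact WithBot.coe_le_coe.2 (add_le_add (le_max' _ _ ha) (le_max' _ _ hb))

theorem Finset.min_eq_min_add_min (hu : u ⊆ s + t)
    (huniq : ∀ a ∈ s, ∀ b ∈ t, UniqueAdd s t a b → a + b ∈ u) : u.min = s.min + t.min := by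
  rcases s.eq_empty_or_nonempty with rfl | hs
  · simp [Finset.subset_empty.1 (by simpa using hu)]
  rcases t.eq_empty_or_nonempty with rfl | ht
  · simp [Finset.subset_empty.1 (by simpa using hu)]
  have hmem := huniq _ (s.min'_mem hs) _ (t.min'_mem ht) (uniqueAdd_min' hs ht)
  rw [← coe_min' hs, ← coe_min' ht, ← WithTop.coe_add]
  refine le_antisymm (min_le hmem) (Finset.le_min fun x hx => ?_)
  obtain ⟨a, ha, b, hb, rfl⟩ := mem_add.1 (hu hx)
  exact WithTop.coe_le_coe.2 (add_le_add (min'_le _ _ ha) (min'_le _ _ hb))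

end Extremal

namespace SkewPoly

open Finsupp

section Relations

variable (p : Fin n → Fin n → k)

theorem skewX_eq_mkAlgHom (i : Fin n) :
    skewX p i = RingQuot.mkAlgHom k (skewRel p) (FreeAlgebra.ι k i) := by
  rw [skewX, ← RingQuot.mkAlgHom_coe k]
  rfl

theorem skewX_mul_skewX (i j : Fin n) :
    skewX p j * skewX p i = p i j • (skewX p i * skewX p j) := by
  simpa [skewX_eq_mkAlgHom] using
    RingQuot.mkAlgHom_rel k (show skewRel p _ _ from ⟨i, j, rfl, rfl⟩)

def skewCoeff (j : Fin n) (a : Fin n →₀ ℕ) : k :=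
  ∏ i, if i < j then p i j ^ a i else 1

theorem skewX_mul_skewMonomial (j : Fin n) (a : Fin n →₀ ℕ) :
    skewX p j * skewMonomial p a =
      skewCoeff p j a • skewMonomial p ⇑(single j 1 + a : Fin n →₀ ℕ) := by
  rw [skewMonomial, mul_prod_ofFn_of_mul_eq_smul _ _ (fun i => p i j ^ a i) j
    fun i _ => mul_pow_of_mul_eq_smul (skewX_mul_skewX p i j) (a i), skewCoeff, skewMonomial]
  congr 3
  funext i
  rcases eq_or_ne i j with rfl | h
  · simp [← pow_succ', add_comm]
  · simp [h]

theorem skewCoeff_add (j : Fin n) (a a' : Fin n →₀ ℕ) :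
    skewCoeff p j (a + a') = skewCoeff p j a * skewCoeff p j a' := by
  simp only [skewCoeff, ← Finset.prod_mul_distrib, coe_add, Pi.add_apply, pow_add]
  refine Finset.prod_congr rfl fun i _ => ?_
  split_ifs <;> simp

theorem skewCoeff_single (j i : Fin n) :
    skewCoeff p j (single i 1) = if i < j then p i j else 1 := by
  rw [skewCoeff, Finset.prod_eq_single i (fun l _ hl => by simp [hl]) (by simp)]
  simp

@[simp]
theorem skewCoeff_zero (j : Fin n) : skewCoeff p j 0 = 1 := by
  simp [skewCoeff]

/-- Left multiplication by `x_j` in the basis of ordered monomials: moving `x_j` past the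
`x_i^(b i)` with `i < j` produces the scalar `skewCoeff p j b`. -/
noncomputable def skewShift (j : Fin n) : Module.End k (Lex (Fin n →₀ ℕ) →₀ k) :=
  weightedShift (toLex (single j 1)) fun b => skewCoeff p j (ofLex b)

end Relations

section Representation

theorem skewCoeff_ne_zero {p : Fin n → Fin n → k} (hp : ∀ i j, p i j * p j i = 1) (j : Fin n)
    (a : Fin n →₀ ℕ) : skewCoeff p j a ≠ 0 :=
  Finset.prod_ne_zero_iff.2 fun i _ => by
    split_ifs
    · exact pow_ne_zero _ (left_ne_zero_of_mul_eq_one (hp i j))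
    · exact one_ne_zero

theorem skewShift_mul_skewShift {p : Fin n → Fin n → k} (hp : ∀ i j, p i j * p j i = 1)
    (hpdiag : ∀ i, p i i = 1) (i j : Fin n) :
    skewShift p j * skewShift p i = p i j • (skewShift p i * skewShift p j) := by
  have hfactor : (if i < j then p i j else 1) = p i j * if j < i then p j i else 1 := by
    rcases lt_trichotomy i j with h | rfl | h
    · simp [h, h.not_gt]
    · simp [hpdiag]
    · simp [h, h.not_gt, hp]
  simp only [skewShift, weightedShift_mul_weightedShift, smul_weightedShift]
  rw [add_comm (toLex (single i 1))]
  congr 1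
  funext b
  simp only [ofLex_add, ofLex_toLex, skewCoeff_add, skewCoeff_single, Pi.smul_apply, smul_eq_mul,
    hfactor]
  ring

variable {p : Fin n → Fin n → k} (hp : ∀ i j, p i j * p j i = 1) (hpdiag : ∀ i, p i i = 1)

noncomputable def rep : SkewPoly p →ₐ[k] Module.End k (Lex (Fin n →₀ ℕ) →₀ k) :=
  RingQuot.liftAlgHom k ⟨FreeAlgebra.lift k (skewShift p), by
    rintro _ _ ⟨i, j, rfl, rfl⟩
    simpa using skewShift_mul_skewShift hp hpdiag i j⟩

theorem rep_skewX (i : Fin n) : rep hp hpdiag (skewX p i) = skewShift p i := by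
  rw [skewX_eq_mkAlgHom, rep, RingQuot.liftAlgHom_mkAlgHom_apply, FreeAlgebra.lift_ι_apply]

/-- The coordinates of `z` in the basis of ordered monomials, by `ofCoeffs_coeffs`. -/
noncomputable def coeffs : SkewPoly p →ₗ[k] Lex (Fin n →₀ ℕ) →₀ k :=
  LinearMap.applyₗ (single 0 1) ∘ₗ (rep hp hpdiag).toLinearMap

theorem coeffs_apply (z : SkewPoly p) : coeffs hp hpdiag z = rep hp hpdiag z (single 0 1) := rfl

variable (p) in
noncomputable def ofCoeffs : (Lex (Fin n →₀ ℕ) →₀ k) →ₗ[k] SkewPoly p :=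
  linearCombination k fun b => skewMonomial p ⇑(ofLex b)

theorem ofCoeffs_rep_apply (z : SkewPoly p) (v : Lex (Fin n →₀ ℕ) →₀ k) :
    ofCoeffs p (rep hp hpdiag z v) = z * ofCoeffs p v := by
  obtain ⟨z, rfl⟩ := RingQuot.mkAlgHom_surjective k (skewRel p) z
  induction z using FreeAlgebra.induction generalizing v with
  | grade0 c =>
    rw [AlgHom.commutes, AlgHom.commutes, Module.algebraMap_end_apply, map_smul, Algebra.smul_def]
  | grade1 i =>
    rw [← skewX_eq_mkAlgHom, rep_skewX]
    induction v using Finsupp.induction_linear with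
    | zero => simp
    | add f g hf hg => rw [map_add, map_add, hf, hg, map_add, mul_add]
    | single b c =>
      simp only [skewShift, weightedShift_single, ofCoeffs, linearCombination_single,
        mul_smul_comm, skewX_mul_skewMonomial, smul_smul, ofLex_add, ofLex_toLex, mul_comm c]
  | mul x y hx hy => rw [map_mul, map_mul, Module.End.mul_apply, hx, hy, mul_assoc]
  | add x y hx hy => rw [map_add, map_add, LinearMap.add_apply, map_add, hx, hy, add_mul]

theorem ofCoeffs_coeffs (z : SkewPoly p) : ofCoeffs p (coeffs hp hpdiag z) = z := by
  rw [coeffs_apply, ofCoeffs_rep_apply, ofCoeffs, linearCombination_single, one_smul]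
  simp [skewMonomial]

theorem coeffs_injective : Function.Injective (coeffs hp hpdiag) :=
  Function.LeftInverse.injective (ofCoeffs_coeffs hp hpdiag)

theorem isWeightedShift_rep_skewMonomial (a : Lex (Fin n →₀ ℕ)) :
    IsWeightedShift (rep hp hpdiag (skewMonomial p ⇑(ofLex a))) a := by
  have hX (i : Fin n) : IsWeightedShift (rep hp hpdiag (skewX p i)) (toLex (single i 1)) :=
    ⟨_, fun b => skewCoeff_ne_zero hp i (ofLex b), rep_skewX hp hpdiag i⟩
  have hsum : ∑ i, ofLex a i • toLex (single i 1) = a :=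
    (map_sum (toLexAddEquiv _) (fun i => ofLex a i • single i 1) _).symm.trans (by simp)
  have h := IsWeightedShift.list_prod_ofFn fun i => (hX i).pow (ofLex a i)
  rw [hsum] at h
  simpa only [skewMonomial, map_list_prod, List.map_ofFn, Function.comp_def, map_pow] using h

theorem rep_eq_sum (z : SkewPoly p) :
    rep hp hpdiag z = ∑ a ∈ (coeffs hp hpdiag z).support,
      coeffs hp hpdiag z a • rep hp hpdiag (skewMonomial p ⇑(ofLex a)) := by
  conv_lhs => rw [← ofCoeffs_coeffs hp hpdiag z]
  rw [ofCoeffs, linearCombination_apply, Finsupp.sum, map_sum]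
  simp only [map_smul]

theorem exists_rep_eq_sum_weightedShift (z : SkewPoly p) :
    ∃ w : Lex (Fin n →₀ ℕ) → Lex (Fin n →₀ ℕ) → k,
      (∀ a ∈ (coeffs hp hpdiag z).support, ∀ b, w a b ≠ 0) ∧
      rep hp hpdiag z = ∑ a ∈ (coeffs hp hpdiag z).support, weightedShift a (w a) := by
  choose γ hγ hrep using isWeightedShift_rep_skewMonomial hp hpdiag
  refine ⟨fun a => coeffs hp hpdiag z a • γ a, fun a ha b => ?_, ?_⟩
  · exact mul_ne_zero (mem_support_iff.1 ha) (hγ a b)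
  · rw [rep_eq_sum]
    exact Finset.sum_congr rfl fun a _ => by rw [hrep, smul_weightedShift]

theorem coeffs_mul (z w : SkewPoly p) :
    coeffs hp hpdiag (z * w) = rep hp hpdiag z (coeffs hp hpdiag w) := by
  rw [coeffs_apply, coeffs_apply, map_mul, Module.End.mul_apply]

open scoped Pointwise in
theorem support_coeffs_mul_subset (z w : SkewPoly p) :
    (coeffs hp hpdiag (z * w)).support ⊆
      (coeffs hp hpdiag z).support + (coeffs hp hpdiag w).support := by
  obtain ⟨γ, -, hrep⟩ := exists_rep_eq_sum_weightedShift hp hpdiag z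
  rw [coeffs_mul, hrep]
  exact support_sum_weightedShift_apply_subset _ _ _

theorem add_mem_support_coeffs_mul {z w : SkewPoly p} {a₀ b₀ : Lex (Fin n →₀ ℕ)}
    (h : UniqueAdd (coeffs hp hpdiag z).support (coeffs hp hpdiag w).support a₀ b₀)
    (ha₀ : a₀ ∈ (coeffs hp hpdiag z).support) (hb₀ : b₀ ∈ (coeffs hp hpdiag w).support) :
    a₀ + b₀ ∈ (coeffs hp hpdiag (z * w)).support := by
  obtain ⟨γ, hγ, hrep⟩ := exists_rep_eq_sum_weightedShift hp hpdiag z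
  rw [mem_support_iff, coeffs_mul, hrep]
  exact sum_weightedShift_apply_add_ne_zero h ha₀ hb₀ (hγ a₀ ha₀ b₀)

theorem coeffs_skewX (i : Fin n) :
    coeffs hp hpdiag (skewX p i) = single (toLex (single i 1)) 1 := by
  rw [coeffs_apply, rep_skewX, skewShift, weightedShift_single, add_zero, ofLex_zero,
    skewCoeff_zero, one_mul]

noncomputable def leadingExp (z : SkewPoly p) : WithBot (Lex (Fin n →₀ ℕ)) :=
  (coeffs hp hpdiag z).support.max

noncomputable def trailingExp (z : SkewPoly p) : WithTop (Lex (Fin n →₀ ℕ)) :=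
  (coeffs hp hpdiag z).support.min

theorem leadingExp_mul (z w : SkewPoly p) :
    leadingExp hp hpdiag (z * w) = leadingExp hp hpdiag z + leadingExp hp hpdiag w :=
  Finset.max_eq_max_add_max (support_coeffs_mul_subset hp hpdiag z w)
    fun _ ha _ hb h => add_mem_support_coeffs_mul hp hpdiag h ha hb

theorem trailingExp_mul (z w : SkewPoly p) :
    trailingExp hp hpdiag (z * w) = trailingExp hp hpdiag z + trailingExp hp hpdiag w :=
  Finset.min_eq_min_add_min (support_coeffs_mul_subset hp hpdiag z w)
    fun _ ha _ hb h => add_mem_support_coeffs_mul hp hpdiag h ha hb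

theorem leadingExp_skewX (i : Fin n) :
    leadingExp hp hpdiag (skewX p i) = toLex (single i 1) := by
  rw [leadingExp, coeffs_skewX, support_single _ one_ne_zero, Finset.max_singleton]

theorem trailingExp_skewX (i : Fin n) :
    trailingExp hp hpdiag (skewX p i) = toLex (single i 1) := by
  rw [trailingExp, coeffs_skewX, support_single _ one_ne_zero, Finset.min_singleton]

theorem leadingExp_ne_bot {z : SkewPoly p} (hz : z ≠ 0) : leadingExp hp hpdiag z ≠ ⊥ := by
  rw [leadingExp, Ne, Finset.max_eq_bot, support_eq_empty]
  exact fun h => hz (coeffs_injective hp hpdiag (h.trans (map_zero _).symm))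

theorem trailingExp_ne_top {z : SkewPoly p} (hz : z ≠ 0) : trailingExp hp hpdiag z ≠ ⊤ := by
  rw [trailingExp, Ne, Finset.min_eq_top, support_eq_empty]
  exact fun h => hz (coeffs_injective hp hpdiag (h.trans (map_zero _).symm))

theorem exists_eq_smul_skewX {w : SkewPoly p} {i : Fin n}
    (hlead : leadingExp hp hpdiag w = toLex (single i 1))
    (htrail : trailingExp hp hpdiag w = toLex (single i 1)) :
    ∃ lam : k, lam ≠ 0 ∧ w = lam • skewX p i := by
  obtain ⟨lam, hlam⟩ : ∃ lam, coeffs hp hpdiag w = single (toLex (single i 1)) lam :=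
    support_subset_singleton'.1 fun b hb => Finset.mem_singleton.2 <|
      le_antisymm (Finset.le_max_of_eq hb hlead) (Finset.min_le_of_eq hb htrail)
  have hw : w = lam • skewX p i := coeffs_injective hp hpdiag <| by
    rw [hlam, map_smul, coeffs_skewX, smul_single, smul_eq_mul, mul_one]
  refine ⟨lam, fun h0 => ?_, hw⟩
  rw [leadingExp, hlam, h0, single_zero, support_zero, Finset.max_empty] at hlead
  exact WithBot.bot_ne_coe hlead

end Representation

end SkewPoly

open SkewPoly

/-- Let `z` be a nonzero normal element of the skew polynomial ring `S_P`.  Then for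
each `i` there is `λ_i ∈ k^×` with `η_{x_i}(z) = λ_i z`, i.e. `x_i z = λ_i (z x_i)`. -/
theorem skewPoly_normal_eigenvalue (p : Fin n → Fin n → k)
    (hp : ∀ i j, p i j * p j i = 1) (hpdiag : ∀ i, p i i = 1)
    (z : SkewPoly p) (hz0 : z ≠ 0)
    (hznormal : Set.range (fun w => w * z) = Set.range (fun w => z * w)) :
    ∀ i : Fin n, ∃ lam : k, lam ≠ 0 ∧ skewX p i * z = lam • (z * skewX p i) := by
  intro i
  obtain ⟨w, hw : z * w = skewX p i * z⟩ : skewX p i * z ∈ Set.range (z * ·) :=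
    hznormal ▸ ⟨skewX p i, rfl⟩
  have hlead : leadingExp hp hpdiag w = toLex (Finsupp.single i 1) := by
    have h := congrArg (leadingExp hp hpdiag) hw
    rw [leadingExp_mul, leadingExp_mul, leadingExp_skewX,
      add_comm _ (leadingExp hp hpdiag z)] at h
    exact WithBot.add_left_cancel (leadingExp_ne_bot hp hpdiag hz0) h
  have htrail : trailingExp hp hpdiag w = toLex (Finsupp.single i 1) := by
    have h := congrArg (trailingExp hp hpdiag) hw
    rw [trailingExp_mul, trailingExp_mul, trailingExp_skewX,
      add_comm _ (trailingExp hp hpdiag z)] at h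
    exact WithTop.add_left_cancel (trailingExp_ne_top hp hpdiag hz0) h
  obtain ⟨lam, hlam, rfl⟩ := exists_eq_smul_skewX hp hpdiag hlead htrail
  exact ⟨lam, hlam, by rw [← hw, mul_smul_comm]⟩
end

section
/- Let A be a maximal order in its quotient ring Q with (I : I) = A for every fractional A-ideal I. Then a fractional A-ideal I satisfies (A : (A : I)) = I if and only if I is reflexive as a left A-module, i.e., the evaluation map I → Hom_{A^op}(Hom_A(I, A), A) is an isomorphism. -/
section Reflexive

variable {Q : Type*} [Ring Q]

/-- A left `A`-module homomorphism from an `A`-`A` submodule `J` of `Q` to a subset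
`I ⊆ Q`, where `A` is a subring of `Q`. -/
structure LHomSet (A : Subring Q) (J I : Set Q) where
  toFun : J → Q
  map_add : ∀ (x y : Q) (hx : x ∈ J) (hy : y ∈ J) (hxy : x + y ∈ J),
    toFun ⟨x + y, hxy⟩ = toFun ⟨x, hx⟩ + toFun ⟨y, hy⟩
  map_smul : ∀ (a x : Q) (_ : a ∈ A) (hx : x ∈ J) (hax : a * x ∈ J),
    toFun ⟨a * x, hax⟩ = a * toFun ⟨x, hx⟩
  mem_target : ∀ x : J, toFun x ∈ I

/-- Pointwise addition on `Hom_A(I, A)`. -/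
def LHomSet.addA {A : Subring Q} {I : Set Q} (f g : LHomSet A I (A : Set Q)) :
    LHomSet A I (A : Set Q) where
  toFun x := f.toFun x + g.toFun x
  map_add x y hx hy hxy := by
    rw [f.map_add x y hx hy hxy, g.map_add x y hx hy hxy]; abel
  map_smul a x ha hx hax := by
    rw [f.map_smul a x ha hx hax, g.map_smul a x ha hx hax, mul_add]
  mem_target x := A.add_mem (f.mem_target x) (g.mem_target x)

/-- The right `A`-action on `Hom_A(I, A)`, `(f · a)(x) = f(x) a`. -/
def LHomSet.rsmulA {A : Subring Q} {I : Set Q} (f : LHomSet A I (A : Set Q)) (a : A) :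
    LHomSet A I (A : Set Q) where
  toFun x := f.toFun x * a
  map_add x y hx hy hxy := by rw [f.map_add x y hx hy hxy, add_mul]
  map_smul b x hb hx hbx := by rw [f.map_smul b x hb hx hbx, mul_assoc]
  mem_target x := A.mul_mem (f.mem_target x) a.2

/-- An element of `Hom_{A^op}(Hom_A(I, A), A)`: an additive, right `A`-linear map
`Hom_A(I, A) → Q` with values in `A`. -/
structure DoubleDualElt (A : Subring Q) (I : Set Q) where
  toFun : LHomSet A I (A : Set Q) → Q
  map_add : ∀ f g : LHomSet A I (A : Set Q), toFun (f.addA g) = toFun f + toFun g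
  map_rsmul : ∀ (f : LHomSet A I (A : Set Q)) (a : A), toFun (f.rsmulA a) = toFun f * a
  mem : ∀ f : LHomSet A I (A : Set Q), toFun f ∈ A

/-- The canonical evaluation map `I → Hom_{A^op}(Hom_A(I, A), A)`. -/
def evalDD (A : Subring Q) (I : Set Q) (x : Q) (hx : x ∈ I) : DoubleDualElt A I where
  toFun f := f.toFun ⟨x, hx⟩
  map_add _ _ := rfl
  map_rsmul _ _ := rfl
  mem f := f.mem_target ⟨x, hx⟩

/-- The colon `(A : J) = {q ∈ Q ∣ qJ ⊆ A}`. -/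
def colonSet (A : Subring Q) (J : Set Q) : Set Q := {q : Q | ∀ x ∈ J, q * x ∈ A}

/-- An `A`-`A` submodule `I` of `Q` is a fractional `A`-ideal if it contains a unit of
`Q` and `uI ⊆ A`, `Iv ⊆ A` for some units `u, v` of `Q`. -/
def IsFracIdeal (A : Subring Q) (I : Set Q) : Prop :=
  (∀ x ∈ I, ∀ y ∈ I, x + y ∈ I) ∧ (∀ x ∈ I, -x ∈ I) ∧
  (∀ a ∈ A, ∀ x ∈ I, a * x ∈ I) ∧ (∀ a ∈ A, ∀ x ∈ I, x * a ∈ I) ∧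
  (∃ u : Qˣ, (u : Q) ∈ I) ∧
  (∃ u : Qˣ, ∀ x ∈ I, (u : Q) * x ∈ A) ∧ (∃ v : Qˣ, ∀ x ∈ I, x * (v : Q) ∈ A)

/-!
Because `Q` consists of left and right fractions of `A` and `I` contains a unit of `Q`,
every left `A`-linear map `I → A` is right multiplication by an element of the right colon
`(A :_r I)`, which equals `(A : I)`. Symmetrically, every element of
`Hom_{A^op}(Hom_A(I, A), A)` is left multiplication by an element of `(A : (A : I))`.
Evaluation thus becomes the inclusion `I ⊆ (A : (A : I))`; it is injective because
`(A :_r I)` contains a unit, and surjective exactly when the inclusion is an equality.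
-/

def HasLeftFractions (A : Subring Q) : Prop :=
  ∀ q : Q, ∃ (a : Qˣ) (b : Q), (a : Q) ∈ A ∧ b ∈ A ∧ q = (↑a⁻¹ : Q) * b

def HasRightFractions (A : Subring Q) : Prop :=
  ∀ q : Q, ∃ (a : Qˣ) (b : Q), (a : Q) ∈ A ∧ b ∈ A ∧ q = b * (↑a⁻¹ : Q)

variable {A : Subring Q} {I : Set Q}

/-- Writing `x u₀⁻¹ = a⁻¹ b` as a left fraction gives `a x = b u₀`, so left `A`-linearity
forces `g x = a⁻¹ b g(u₀) = x u₀⁻¹ g(u₀)`. -/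
theorem apply_eq_mul_of_map_mul_left
    (hlfrac : HasLeftFractions A)
    {J : Set Q} (hJ : ∀ a ∈ A, ∀ x ∈ J, a * x ∈ J) (g : J → Q)
    (hg : ∀ (a x : Q) (_ : a ∈ A) (hx : x ∈ J) (hax : a * x ∈ J),
      g ⟨a * x, hax⟩ = a * g ⟨x, hx⟩)
    (u₀ : Qˣ) (hu₀ : (u₀ : Q) ∈ J) (x : Q) (hx : x ∈ J) :
    g ⟨x, hx⟩ = x * ((↑u₀⁻¹ : Q) * g ⟨u₀, hu₀⟩) := by
  obtain ⟨a, b, ha, hb, hab⟩ := hlfrac (x * (↑u₀⁻¹ : Q))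
  have hax_eq : (a : Q) * x = b * u₀ :=
    calc (a : Q) * x = a * (x * ↑u₀⁻¹ * u₀) := by rw [Units.inv_mul_cancel_right]
      _ = b * u₀ := by rw [hab, ← mul_assoc, Units.mul_inv_cancel_left]
  have hax : (a : Q) * x ∈ J := hJ a ha x hx
  have hbu : b * (u₀ : Q) ∈ J := hax_eq ▸ hax
  have key : (a : Q) * g ⟨x, hx⟩ = b * g ⟨u₀, hu₀⟩ := by
    rw [← hg a x ha hx hax, ← hg b u₀ hb hu₀ hbu]
    exact congrArg g (Subtype.ext hax_eq)
  calc g ⟨x, hx⟩ = ↑a⁻¹ * (a * g ⟨x, hx⟩) := (Units.inv_mul_cancel_left a _).symm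
    _ = ↑a⁻¹ * b * g ⟨u₀, hu₀⟩ := by rw [key, mul_assoc]
    _ = x * (↑u₀⁻¹ * g ⟨u₀, hu₀⟩) := by rw [← hab, mul_assoc]

theorem apply_eq_mul_of_map_mul_right
    (hrfrac : HasRightFractions A)
    {J : Set Q} (hJ : ∀ a ∈ A, ∀ x ∈ J, x * a ∈ J) (g : J → Q)
    (hg : ∀ (a x : Q) (_ : a ∈ A) (hx : x ∈ J) (hxa : x * a ∈ J),
      g ⟨x * a, hxa⟩ = g ⟨x, hx⟩ * a)
    (u₀ : Qˣ) (hu₀ : (u₀ : Q) ∈ J) (x : Q) (hx : x ∈ J) :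
    g ⟨x, hx⟩ = g ⟨u₀, hu₀⟩ * (↑u₀⁻¹ : Q) * x := by
  obtain ⟨a, b, ha, hb, hab⟩ := hrfrac ((↑u₀⁻¹ : Q) * x)
  have hxa_eq : x * (a : Q) = u₀ * b :=
    calc x * (a : Q) = u₀ * (↑u₀⁻¹ * x) * a := by rw [Units.mul_inv_cancel_left]
      _ = u₀ * b := by rw [hab, mul_assoc, Units.inv_mul_cancel_right]
  have hxa : x * (a : Q) ∈ J := hJ a ha x hx
  have hub : (u₀ : Q) * b ∈ J := hxa_eq ▸ hxa
  have key : g ⟨x, hx⟩ * a = g ⟨u₀, hu₀⟩ * b := by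
    rw [← hg a x ha hx hxa, ← hg b u₀ hb hu₀ hub]
    exact congrArg g (Subtype.ext hxa_eq)
  calc g ⟨x, hx⟩ = g ⟨x, hx⟩ * a * ↑a⁻¹ := (Units.mul_inv_cancel_right _ a).symm
    _ = g ⟨u₀, hu₀⟩ * (b * ↑a⁻¹) := by rw [key, mul_assoc]
    _ = g ⟨u₀, hu₀⟩ * ↑u₀⁻¹ * x := by rw [← hab, mul_assoc]

/-- Identified with `Hom_A(I, A)` through `LHomSet.rmul`. -/
def rightColon (A : Subring Q) (I : Set Q) : Set Q := {q : Q | ∀ x ∈ I, x * q ∈ A}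

theorem LHomSet.ext {J : Set Q} {f g : LHomSet A J I} (h : f.toFun = g.toFun) : f = g := by
  cases f; cases g; cases h; rfl

theorem DoubleDualElt.ext {f g : DoubleDualElt A I} (h : f.toFun = g.toFun) : f = g := by
  cases f; cases g; cases h; rfl

def LHomSet.rmul (q : Q) (hq : q ∈ rightColon A I) : LHomSet A I (A : Set Q) where
  toFun x := x.1 * q
  map_add x y _ _ _ := add_mul x y q
  map_smul a x _ _ _ := mul_assoc a x q
  mem_target x := hq x.1 x.2

theorem mul_mem_rightColon {q a : Q} (hq : q ∈ rightColon A I) (ha : a ∈ A) :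
    q * a ∈ rightColon A I := fun x hx => mul_assoc x q a ▸ A.mul_mem (hq x hx) ha

theorem subset_colonSet_rightColon : I ⊆ colonSet A (rightColon A I) :=
  fun x hx _ hq => hq x hx

theorem LHomSet.rmul_mul {q a : Q} (hq : q ∈ rightColon A I) (ha : a ∈ A)
    (hqa : q * a ∈ rightColon A I) :
    LHomSet.rmul (q * a) hqa = (LHomSet.rmul q hq).rsmulA ⟨a, ha⟩ :=
  LHomSet.ext (funext fun x => (mul_assoc x.1 q a).symm)

/-- Independent of the unit `u₀ ∈ I`, since `f` is right multiplication by it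
(`LHomSet.eq_rmul_coeff`). -/
def LHomSet.coeff {T : Set Q} (u₀ : Qˣ) (hu₀ : (u₀ : Q) ∈ I) (f : LHomSet A I T) : Q :=
  ↑u₀⁻¹ * f.toFun ⟨u₀, hu₀⟩

theorem LHomSet.coeff_rmul (u₀ : Qˣ) (hu₀ : (u₀ : Q) ∈ I) {q : Q} (hq : q ∈ rightColon A I) :
    (LHomSet.rmul q hq).coeff u₀ hu₀ = q :=
  Units.inv_mul_cancel_left u₀ q

theorem LHomSet.toFun_eq_mul_coeff (hlfrac : HasLeftFractions A)
    (hI : ∀ a ∈ A, ∀ x ∈ I, a * x ∈ I) (u₀ : Qˣ) (hu₀ : (u₀ : Q) ∈ I)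
    {T : Set Q} (f : LHomSet A I T) (x : Q) (hx : x ∈ I) :
    f.toFun ⟨x, hx⟩ = x * f.coeff u₀ hu₀ :=
  apply_eq_mul_of_map_mul_left hlfrac hI f.toFun f.map_smul u₀ hu₀ x hx

theorem LHomSet.coeff_mem_rightColon (hlfrac : HasLeftFractions A)
    (hI : ∀ a ∈ A, ∀ x ∈ I, a * x ∈ I) (u₀ : Qˣ) (hu₀ : (u₀ : Q) ∈ I)
    (f : LHomSet A I A) : f.coeff u₀ hu₀ ∈ rightColon A I :=
  fun x hx => f.toFun_eq_mul_coeff hlfrac hI u₀ hu₀ x hx ▸ f.mem_target ⟨x, hx⟩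

theorem LHomSet.eq_rmul_coeff (hlfrac : HasLeftFractions A)
    (hI : ∀ a ∈ A, ∀ x ∈ I, a * x ∈ I) (u₀ : Qˣ) (hu₀ : (u₀ : Q) ∈ I)
    (f : LHomSet A I A) :
    f = LHomSet.rmul (f.coeff u₀ hu₀) (f.coeff_mem_rightColon hlfrac hI u₀ hu₀) :=
  LHomSet.ext (funext fun x => f.toFun_eq_mul_coeff hlfrac hI u₀ hu₀ x.1 x.2)

def DoubleDualElt.ofMulCoeff (u₀ : Qˣ) (hu₀ : (u₀ : Q) ∈ I) (x : Q)
    (hx : ∀ f : LHomSet A I A, x * f.coeff u₀ hu₀ ∈ A) : DoubleDualElt A I where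
  toFun f := x * f.coeff u₀ hu₀
  map_add f g := by simp only [LHomSet.coeff, LHomSet.addA, mul_add]
  map_rsmul f a := by simp only [LHomSet.coeff, LHomSet.rsmulA, mul_assoc]
  mem := hx

theorem evalDD_injective {v : Qˣ} (hv : (v : Q) ∈ rightColon A I) :
    Function.Injective (fun x : I => evalDD A I x.1 x.2) := by
  rintro ⟨x, hx⟩ ⟨y, hy⟩ h
  have hxy : x * v = y * v := congrArg (fun φ : DoubleDualElt A I => φ.toFun (.rmul v hv)) h
  exact Subtype.ext ((Units.mul_left_inj v).1 hxy)

/-- Restricted along `q ↦ rmul q`, an element of the double dual is a right `A`-linear map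
on `(A :_r I)`, to which `apply_eq_mul_of_map_mul_right` applies. -/
theorem DoubleDualElt.exists_apply_rmul_eq_mul
    (hrfrac : HasRightFractions A)
    {v : Qˣ} (hv : (v : Q) ∈ rightColon A I) (φ : DoubleDualElt A I) :
    ∃ x₀ ∈ colonSet A (rightColon A I),
      ∀ (q : Q) (hq : q ∈ rightColon A I), φ.toFun (.rmul q hq) = x₀ * q := by
  let ψ : rightColon A I → Q := fun q => φ.toFun (.rmul q.1 q.2)
  have hψ_mul : ∀ (a q : Q) (ha : a ∈ A) (hq : q ∈ rightColon A I)
      (hqa : q * a ∈ rightColon A I), ψ ⟨q * a, hqa⟩ = ψ ⟨q, hq⟩ * a := by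
    intro a q ha hq hqa
    simp only [ψ, LHomSet.rmul_mul hq ha hqa]
    exact φ.map_rsmul _ ⟨a, ha⟩
  have hψ := apply_eq_mul_of_map_mul_right hrfrac (fun _ ha _ hq => mul_mem_rightColon hq ha)
    ψ hψ_mul v hv
  refine ⟨ψ ⟨v, hv⟩ * ↑v⁻¹, fun q hq => ?_, hψ⟩
  rw [← hψ q hq]
  exact φ.mem _

theorem evalDD_surjective (hlfrac : HasLeftFractions A)
    (hI : ∀ a ∈ A, ∀ x ∈ I, a * x ∈ I) (u₀ : Qˣ) (hu₀ : (u₀ : Q) ∈ I)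
    (hrfrac : HasRightFractions A)
    {v : Qˣ} (hv : (v : Q) ∈ rightColon A I) (hcolon : colonSet A (rightColon A I) ⊆ I) :
    Function.Surjective (fun x : I => evalDD A I x.1 x.2) := by
  intro φ
  obtain ⟨x₀, hx₀, hφ⟩ := φ.exists_apply_rmul_eq_mul hrfrac hv
  refine ⟨⟨x₀, hcolon hx₀⟩, DoubleDualElt.ext (funext fun f => ?_)⟩
  change f.toFun ⟨x₀, _⟩ = φ.toFun f
  rw [f.toFun_eq_mul_coeff hlfrac hI u₀ hu₀, ← hφ _ (f.coeff_mem_rightColon hlfrac hI u₀ hu₀),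
    ← f.eq_rmul_coeff hlfrac hI u₀ hu₀]

theorem colonSet_rightColon_subset_of_surjective (hlfrac : HasLeftFractions A)
    (hI : ∀ a ∈ A, ∀ x ∈ I, a * x ∈ I) (u₀ : Qˣ) (hu₀ : (u₀ : Q) ∈ I)
    {v : Qˣ} (hv : (v : Q) ∈ rightColon A I)
    (hsurj : Function.Surjective (fun x : I => evalDD A I x.1 x.2)) :
    colonSet A (rightColon A I) ⊆ I := by
  intro x hx
  obtain ⟨⟨y, hy⟩, hyx⟩ := hsurj (.ofMulCoeff u₀ hu₀ x
    fun f => hx _ (f.coeff_mem_rightColon hlfrac hI u₀ hu₀))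
  have hyv : y * v = x * (LHomSet.rmul (v : Q) hv).coeff u₀ hu₀ :=
    congrArg (fun φ : DoubleDualElt A I => φ.toFun (.rmul (v : Q) hv)) hyx
  rw [LHomSet.coeff_rmul, Units.mul_left_inj] at hyv
  exact hyv ▸ hy

theorem colon_colon_eq_iff_reflexive_general (A : Subring Q)
    (hlfrac : ∀ q : Q, ∃ (a : Qˣ) (b : Q), (a : Q) ∈ A ∧ b ∈ A ∧ q = (↑a⁻¹ : Q) * b)
    (hrfrac : ∀ q : Q, ∃ (a : Qˣ) (b : Q), (a : Q) ∈ A ∧ b ∈ A ∧ q = b * (↑a⁻¹ : Q))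
    (hcolon_eq : ∀ J : Set Q, IsFracIdeal A J →
      colonSet A J = {q : Q | ∀ x ∈ J, x * q ∈ A})
    (I : Set Q) (hI : IsFracIdeal A I) :
    colonSet A (colonSet A I) = I ↔
      Function.Bijective (fun x : I => evalDD A I x.1 x.2) := by
  have hright : colonSet A I = rightColon A I := hcolon_eq I hI
  obtain ⟨-, -, hmul_left, -, ⟨u₀, hu₀⟩, -, ⟨v, hv⟩⟩ := hI
  rw [hright]
  constructor
  · intro hcolon
    exact ⟨evalDD_injective hv,
      evalDD_surjective hlfrac hmul_left u₀ hu₀ hrfrac hv hcolon.le⟩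
  · intro hbij
    exact (colonSet_rightColon_subset_of_surjective hlfrac hmul_left u₀ hu₀ hv hbij.2).antisymm
      subset_colonSet_rightColon

/-- Let `A` be a maximal order in its quotient ring `Q`, so that `(I : I) = A` for
every fractional `A`-ideal `I` and left and right colons into `A` coincide.  Then a
fractional `A`-ideal `I` satisfies `(A : (A : I)) = I` if and only if `I` is
reflexive as a left `A`-module, i.e. the evaluation map
`I → Hom_{A^op}(Hom_A(I, A), A)` is bijective. -/
theorem colon_colon_eq_iff_reflexive (A : Subring Q)
    (hprime : ∀ x y : Q, x ∈ A → y ∈ A → (∀ r ∈ A, x * r * y = 0) → x = 0 ∨ y = 0)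
    (hreg_unit : ∀ a : Q, a ∈ A → (∀ b : Q, (a * b = 0 → b = 0) ∧ (b * a = 0 → b = 0)) →
      ∃ u : Qˣ, (u : Q) = a)
    (hlfrac : ∀ q : Q, ∃ (a : Qˣ) (b : Q), (a : Q) ∈ A ∧ b ∈ A ∧ q = (↑a⁻¹ : Q) * b)
    (hrfrac : ∀ q : Q, ∃ (a : Qˣ) (b : Q), (a : Q) ∈ A ∧ b ∈ A ∧ q = b * (↑a⁻¹ : Q))
    (hmaxl : ∀ J : Set Q, IsFracIdeal A J → {q : Q | ∀ x ∈ J, q * x ∈ J} = (A : Set Q))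
    (hmaxr : ∀ J : Set Q, IsFracIdeal A J → {q : Q | ∀ x ∈ J, x * q ∈ J} = (A : Set Q))
    (hcolon_eq : ∀ J : Set Q, IsFracIdeal A J →
      colonSet A J = {q : Q | ∀ x ∈ J, x * q ∈ A})
    (I : Set Q) (hI : IsFracIdeal A I) :
    colonSet A (colonSet A I) = I ↔
      Function.Bijective (fun x : I => evalDD A I x.1 x.2) :=
  colon_colon_eq_iff_reflexive_general A hlfrac hrfrac hcolon_eq I hI

end Reflexive
end

section
/- Let A be an ℕ-graded connected k-algebra that is a graded domain, and let z ∈ A be a nonzero normal element written as z = z_1 + ⋯ + z_n with homogeneous components z_i of strictly increasing degrees. Then for every homogeneous a ∈ A, the element η_z(a) (defined by za = η_z(a)z) is homogeneous of the same degree as a, and z_i a = η_z(a) z_i for every i. In particular, the lowest homogeneous component z_1 is a normal element with η_{z_1} = η_z. -/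
/-! In a graded domain, graded by a linearly ordered cancellative monoid, the lowest and the
highest degree of a product are the sums of those of the factors. Comparing both sides of
`z * a = w * z` for `a` homogeneous of degree `e` therefore pins the lowest and highest degree of
`w` to `e`, so `w` is homogeneous of degree `e`. Then `z_j * a` and `w * z_j` are the
components of degree `d_j + e` of the two sides, hence equal. Since every element is a sum of
homogeneous ones, `z_1 * s = η_z(s) * z_1` for all `s`, which makes `z_1` normal. -/

open DirectSum

def IsNormalElem {A : Type*} [Mul A] (z : A) : Prop :=
  Set.range (fun r => r * z) = Set.range (fun r => z * r)

namespace DirectSum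

section Decomposition

variable {ι M σ : Type*} [DecidableEq ι] [AddCommMonoid M] [SetLike σ M]
  [AddSubmonoidClass σ M] (ℳ : ι → σ) [Decomposition ℳ]

theorem coe_decompose_sum_of_mem {κ : Type*} [Fintype κ] {c : κ → M} {d : κ → ι}
    (hd : Function.Injective d) (hc : ∀ j, c j ∈ ℳ (d j)) (j : κ) :
    (decompose ℳ (∑ j, c j) (d j) : M) = c j := by
  rw [decompose_sum, DFinsupp.finsetSum_apply, AddSubmonoidClass.coe_finsetSum,
    Fintype.sum_eq_single j fun j' hj' => decompose_of_mem_ne ℳ (hc j') (hd.ne hj'),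
    decompose_of_mem_same ℳ (hc j)]

variable [∀ i (x : ℳ i), Decidable (x ≠ 0)]

theorem support_decompose_of_mem {x : M} {i : ι} (hx : x ∈ ℳ i) (hx0 : x ≠ 0) :
    (decompose ℳ x).support = {i} := by
  rw [decompose_of_mem ℳ hx]
  exact support_of _ _ fun h => hx0 (congrArg Subtype.val h)

theorem support_decompose_nonempty {x : M} (hx0 : x ≠ 0) : (decompose ℳ x).support.Nonempty := by
  rw [Finset.nonempty_iff_ne_empty]
  intro h
  apply hx0
  rw [← sum_support_decompose ℳ x, h, Finset.sum_empty]

theorem mem_of_support_decompose_subset {x : M} {i : ι}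
    (h : (decompose ℳ x).support ⊆ {i}) : x ∈ ℳ i := by
  rw [← sum_support_decompose ℳ x]
  exact sum_mem fun j hj => Finset.mem_singleton.1 (h hj) ▸ SetLike.coe_mem _

end Decomposition

section GradedRing

variable {ι A σ : Type*} [DecidableEq ι] [AddMonoid ι] [Semiring A] [SetLike σ A]
  [AddSubmonoidClass σ A] (𝒜 : ι → σ) [GradedRing 𝒜] [∀ i (x : 𝒜 i), Decidable (x ≠ 0)]

theorem coe_decompose_mul_add_of_unique {x y : A} {p q : ι}
    (h : ∀ i ∈ (decompose 𝒜 x).support, ∀ j ∈ (decompose 𝒜 y).support,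
      i + j = p + q → i = p ∧ j = q) :
    (decompose 𝒜 (x * y) (p + q) : A) = decompose 𝒜 x p * decompose 𝒜 y q := by
  rw [decompose_mul, coe_mul_apply, Finset.sum_eq_single (p, q)]
  · rintro ⟨i, j⟩ hij hne
    simp only [Finset.mem_filter, Finset.mem_product] at hij
    obtain ⟨rfl, rfl⟩ := h i hij.1.1 j hij.1.2 hij.2
    exact absurd rfl hne
  · intro hpq
    simp only [Finset.mem_filter, Finset.mem_product, DFinsupp.mem_support_iff, ne_eq,
      and_true, not_and_or, not_not] at hpq
    rcases hpq with hp | hq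
    · rw [hp, ZeroMemClass.coe_zero, zero_mul]
    · rw [hq, ZeroMemClass.coe_zero, mul_zero]

theorem exists_add_eq_of_mem_support_decompose_mul {x y : A} {n : ι}
    (hn : n ∈ (decompose 𝒜 (x * y)).support) :
    ∃ i ∈ (decompose 𝒜 x).support, ∃ j ∈ (decompose 𝒜 y).support, i + j = n := by
  rw [DFinsupp.mem_support_iff, ne_eq, ← ZeroMemClass.coe_eq_zero, decompose_mul,
    coe_mul_apply] at hn
  obtain ⟨⟨i, j⟩, hij, -⟩ := Finset.exists_ne_zero_of_sum_ne_zero hn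
  simp only [Finset.mem_filter, Finset.mem_product] at hij
  exact ⟨i, hij.1.1, j, hij.1.2, hij.2⟩

theorem add_mem_support_decompose_mul [NoZeroDivisors A] {x y : A} {p q : ι}
    (hp : p ∈ (decompose 𝒜 x).support) (hq : q ∈ (decompose 𝒜 y).support)
    (h : ∀ i ∈ (decompose 𝒜 x).support, ∀ j ∈ (decompose 𝒜 y).support,
      i + j = p + q → i = p ∧ j = q) :
    p + q ∈ (decompose 𝒜 (x * y)).support := by
  rw [DFinsupp.mem_support_iff] at hp hq ⊢
  rw [ne_eq, ← ZeroMemClass.coe_eq_zero, coe_decompose_mul_add_of_unique 𝒜 h]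
  exact mul_ne_zero (fun h => hp (ZeroMemClass.coe_eq_zero.1 h))
    (fun h => hq (ZeroMemClass.coe_eq_zero.1 h))

end GradedRing

section Ordered

variable {ι A σ : Type*} [DecidableEq ι] [AddCommMonoid ι] [LinearOrder ι]
  [IsOrderedCancelAddMonoid ι] [Semiring A] [NoZeroDivisors A] [SetLike σ A]
  [AddSubmonoidClass σ A] (𝒜 : ι → σ) [GradedRing 𝒜] [∀ i (x : 𝒜 i), Decidable (x ≠ 0)]

theorem min_support_decompose_mul (x y : A) :
    (decompose 𝒜 (x * y)).support.min =
      (decompose 𝒜 x).support.min + (decompose 𝒜 y).support.min := by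
  rcases eq_or_ne x 0 with rfl | hx0
  · simp
  rcases eq_or_ne y 0 with rfl | hy0
  · simp
  have hx := support_decompose_nonempty 𝒜 hx0
  have hy := support_decompose_nonempty 𝒜 hy0
  rw [← Finset.coe_min' hx, ← Finset.coe_min' hy, ← WithTop.coe_add]
  refine le_antisymm (Finset.min_le (add_mem_support_decompose_mul 𝒜
    (Finset.min'_mem _ hx) (Finset.min'_mem _ hy) fun i hi j hj hij => ?_))
    (Finset.le_min fun n hn => ?_)
  · exact ((add_eq_add_iff_eq_and_eq (Finset.min'_le _ _ hi) (Finset.min'_le _ _ hj)).1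
      hij.symm).imp Eq.symm Eq.symm
  · obtain ⟨i, hi, j, hj, rfl⟩ := exists_add_eq_of_mem_support_decompose_mul 𝒜 hn
    exact WithTop.coe_le_coe.2 (add_le_add (Finset.min'_le _ _ hi) (Finset.min'_le _ _ hj))

theorem max_support_decompose_mul (x y : A) :
    (decompose 𝒜 (x * y)).support.max =
      (decompose 𝒜 x).support.max + (decompose 𝒜 y).support.max := by
  rcases eq_or_ne x 0 with rfl | hx0
  · simp
  rcases eq_or_ne y 0 with rfl | hy0
  · simp
  have hx := support_decompose_nonempty 𝒜 hx0
  have hy := support_decompose_nonempty 𝒜 hy0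
  rw [← Finset.coe_max' hx, ← Finset.coe_max' hy, ← WithBot.coe_add]
  refine le_antisymm (Finset.max_le fun n hn => ?_)
    (Finset.le_max (add_mem_support_decompose_mul 𝒜
    (Finset.max'_mem _ hx) (Finset.max'_mem _ hy) fun i hi j hj hij => ?_))
  · obtain ⟨i, hi, j, hj, rfl⟩ := exists_add_eq_of_mem_support_decompose_mul 𝒜 hn
    exact WithBot.coe_le_coe.2 (add_le_add (Finset.le_max' _ _ hi) (Finset.le_max' _ _ hj))
  · exact (add_eq_add_iff_eq_and_eq (Finset.le_max' _ _ hi) (Finset.le_max' _ _ hj)).1 hij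

theorem mem_of_mul_eq_mul_of_mem {z a w : A} {e : ι} (hz : z ≠ 0) (ha : a ∈ 𝒜 e)
    (h : z * a = w * z) : w ∈ 𝒜 e := by
  rcases eq_or_ne a 0 with rfl | ha0
  · rw [mul_zero, eq_comm, mul_eq_zero, or_iff_left hz] at h
    exact h ▸ zero_mem _
  have hSa := support_decompose_of_mem 𝒜 ha ha0
  obtain ⟨p, hp⟩ := Finset.min_of_nonempty (support_decompose_nonempty 𝒜 hz)
  obtain ⟨q, hq⟩ := Finset.max_of_nonempty (support_decompose_nonempty 𝒜 hz)
  have hmin : (decompose 𝒜 w).support.min = e := by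
    have := min_support_decompose_mul 𝒜 z a
    rw [h, min_support_decompose_mul, hSa, Finset.min_singleton, hp, add_comm (p : WithTop ι)]
      at this
    exact WithTop.add_right_cancel WithTop.coe_ne_top this
  have hmax : (decompose 𝒜 w).support.max = e := by
    have := max_support_decompose_mul 𝒜 z a
    rw [h, max_support_decompose_mul, hSa, Finset.max_singleton, hq, add_comm (q : WithBot ι)]
      at this
    exact WithBot.add_right_cancel WithBot.coe_ne_bot this
  refine mem_of_support_decompose_subset 𝒜 fun i hi => Finset.mem_singleton.2 (le_antisymm ?_ ?_)
  · exact WithBot.coe_le_coe.1 (hmax ▸ Finset.le_max hi)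
  · exact WithTop.coe_le_coe.1 (hmin ▸ Finset.min_le hi)

end Ordered

theorem mul_eq_mul_of_sum_mul_eq_mul_sum {ι A σ κ : Type*} [DecidableEq ι]
    [AddCancelCommMonoid ι] [Semiring A] [SetLike σ A] [AddSubmonoidClass σ A] (𝒜 : ι → σ)
    [GradedRing 𝒜] [Fintype κ] {c : κ → A} {d : κ → ι} (hd : Function.Injective d)
    (hc : ∀ j, c j ∈ 𝒜 (d j)) {a w : A} {e : ι} (ha : a ∈ 𝒜 e) (hw : w ∈ 𝒜 e)
    (h : (∑ j, c j) * a = w * ∑ j, c j) (j : κ) : c j * a = w * c j := by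
  have hca : ∀ j, c j * a ∈ 𝒜 (d j + e) := fun j => SetLike.mul_mem_graded (hc j) ha
  have hwc : ∀ j, w * c j ∈ 𝒜 (d j + e) := fun j =>
    add_comm e (d j) ▸ SetLike.mul_mem_graded hw (hc j)
  have hde : Function.Injective (d · + e) := (add_left_injective e).comp hd
  rw [← coe_decompose_sum_of_mem 𝒜 hde hca j, ← coe_decompose_sum_of_mem 𝒜 hde hwc j,
    ← Finset.sum_mul, ← Finset.mul_sum, h]

end DirectSum

theorem IsNormalElem.of_forall_mem_mul_eq_mul {ι A σ : Type*} [DecidableEq ι] [Semiring A]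
    [IsRightCancelMulZero A] [SetLike σ A] [AddSubmonoidClass σ A] (𝒜 : ι → σ)
    [Decomposition 𝒜] {z z' : A} (hz0 : z ≠ 0) (hz : IsNormalElem z)
    (h : ∀ i, ∀ a ∈ 𝒜 i, ∀ w, z * a = w * z → z' * a = w * z') : IsNormalElem z' := by
  have hconj : ∀ s, ∃ r, z * s = r * z ∧ z' * s = r * z' := by
    intro s
    induction s using Decomposition.inductionOn 𝒜 with
    | zero => exact ⟨0, by simp, by simp⟩
    | homogeneous a =>
      obtain ⟨w, hw⟩ : z * a ∈ Set.range (fun r => r * z) := hz ▸ ⟨a, rfl⟩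
      exact ⟨w, hw.symm, h _ a a.2 w hw.symm⟩
    | add s s' hs hs' =>
      obtain ⟨r, hr, hr'⟩ := hs
      obtain ⟨t, ht, ht'⟩ := hs'
      exact ⟨r + t, by rw [mul_add, add_mul, hr, ht], by rw [mul_add, add_mul, hr', ht']⟩
  apply Set.Subset.antisymm
  · rintro _ ⟨r, rfl⟩
    obtain ⟨s, hs⟩ : r * z ∈ Set.range (fun s => z * s) := hz ▸ ⟨r, rfl⟩
    obtain ⟨r', hr, hr'⟩ := hconj s
    obtain rfl : r' = r := mul_right_cancel₀ hz0 (hr.symm.trans hs)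
    exact ⟨s, hr'⟩
  · rintro _ ⟨s, rfl⟩
    obtain ⟨r, -, hr'⟩ := hconj s
    exact ⟨r, hr'.symm⟩

theorem lowest_component_of_normal_is_normal_general {k A : Type*} [Field k] [Ring A]
    [IsDomain A] [Algebra k A] (𝒜 : ℕ → Submodule k A) [GradedAlgebra 𝒜]
    (z : A) (hz0 : z ≠ 0)
    (hznormal : Set.range (fun r => r * z) = Set.range (fun r => z * r))
    (m : ℕ) (hm : 0 < m) (d : Fin m → ℕ) (hd : StrictMono d)
    (zc : Fin m → A) (hzc : ∀ j, zc j ∈ 𝒜 (d j))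
    (hdecomp : z = ∑ j : Fin m, zc j) :
    (∀ (e : ℕ) (a : A), a ∈ 𝒜 e → ∀ w : A, z * a = w * z →
        w ∈ 𝒜 e ∧ ∀ j : Fin m, zc j * a = w * zc j) ∧
    Set.range (fun r => r * zc ⟨0, hm⟩) = Set.range (fun r => zc ⟨0, hm⟩ * r) := by
  classical
  have hhomogeneous : ∀ (e : ℕ) (a : A), a ∈ 𝒜 e → ∀ w : A, z * a = w * z →
      w ∈ 𝒜 e ∧ ∀ j : Fin m, zc j * a = w * zc j := by
    intro e a ha w hw
    have hwe := DirectSum.mem_of_mul_eq_mul_of_mem 𝒜 hz0 ha hw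
    exact ⟨hwe, DirectSum.mul_eq_mul_of_sum_mul_eq_mul_sum 𝒜 hd.injective hzc ha hwe
      (hdecomp ▸ hw)⟩
  exact ⟨hhomogeneous, IsNormalElem.of_forall_mem_mul_eq_mul 𝒜 hz0 hznormal
    fun e a ha w hw => (hhomogeneous e a ha w hw).2 ⟨0, hm⟩⟩

/-- Let `A` be a connected `ℕ`-graded `k`-algebra which is a domain, and let
`z = z_1 + ⋯ + z_m` be a nonzero normal element written as a sum of nonzero
homogeneous components `z_j ∈ A_{d j}` of strictly increasing degrees.  Then for
every homogeneous `a ∈ A_e` and any `w` with `z * a = w * z` (i.e. `w = η_z(a)`),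
`w` is homogeneous of the same degree `e` and `z_j * a = w * z_j` for every `j`;
in particular the lowest component `z_1` is normal with `η_{z_1} = η_z`. -/
theorem lowest_component_of_normal_is_normal {k A : Type*} [Field k] [Ring A]
    [IsDomain A] [Algebra k A] (𝒜 : ℕ → Submodule k A) [GradedAlgebra 𝒜]
    (hconn : ∀ x ∈ 𝒜 0, ∃ c : k, x = algebraMap k A c)
    (z : A) (hz0 : z ≠ 0)
    (hznormal : Set.range (fun r => r * z) = Set.range (fun r => z * r))
    (m : ℕ) (hm : 0 < m) (d : Fin m → ℕ) (hd : StrictMono d)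
    (zc : Fin m → A) (hzc : ∀ j, zc j ∈ 𝒜 (d j)) (hzc0 : ∀ j, zc j ≠ 0)
    (hdecomp : z = ∑ j : Fin m, zc j) :
    (∀ (e : ℕ) (a : A), a ∈ 𝒜 e → ∀ w : A, z * a = w * z →
        w ∈ 𝒜 e ∧ ∀ j : Fin m, zc j * a = w * zc j) ∧
    Set.range (fun r => r * zc ⟨0, hm⟩) = Set.range (fun r => zc ⟨0, hm⟩ * r) :=
  lowest_component_of_normal_is_normal_general 𝒜 z hz0 hznormal m hm d hd zc hzc hdecomp
end
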